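/- arXiv:2110.14637 — 3 statements merged into one kernel-verified Lean document; each statement's English description precedes it below -/
import Mathlib

section
/- Let X be a proper geodesic metric space with basepoint e. Any geodesic ray from e representing an M-Morse direction z is M_C-Morse, where the Morse gauge M_C depends only on M (and not on z or the ray). -/
/-
Let `f t` be the distance from `ζ t` to the image of `ξ`, and `m` its liminf, finite because
`f` is bounded. At arbitrarily late times `u < v` with `v - u` large, `f u, f v < m + 1/2`
while `f > m - 1/2` on `[u, v]`. Joining a point of `ξ` at distance `< m + 1/2` to `ζ u`,
following `ζ` to `ζ v` and going back to `ξ` is then a `(3, 1)`-quasi-geodesic, because its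
middle stays as far from `ξ` as the two caps are long; so the Morse property gives
`f u ≤ M 3 1`, uniformly. Hence `ζ [0, v]`, capped at `ζ v` by a geodesic of length `≤ M 3 1`
back to `ξ`, is a `(1, 4 M 3 1)`-quasi-geodesic with endpoints on `ξ`, and
`d(ξ t, ζ t) ≤ D := 2 M 1 (4 M 3 1)` for all `t`. Finally, an `(L, e)`-quasi-geodesic with
endpoints on `ζ`, capped by geodesics of length `≤ D` to `ξ`, is an `(L, e + 4 D)`-quasi-geodesic
with endpoints on `ξ`, so `M_C L e = M L (e + 4 D) + D` works.
-/

open Set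

/-- A Morse gauge. -/
abbrev MorseGauge := ℝ → ℝ → ℝ

variable {X : Type*} [MetricSpace X]

/-- `γ` is a `(L, e)`-quasi-geodesic on the parameter set `s`. -/
def IsQGOn (L e : ℝ) (γ : ℝ → X) (s : Set ℝ) : Prop :=
  ∀ t ∈ s, ∀ u ∈ s,
    (1 / L) * |t - u| - e ≤ dist (γ t) (γ u) ∧ dist (γ t) (γ u) ≤ L * |t - u| + e

/-- `γ` is a geodesic (unit-speed) on the parameter set `s`. -/
def IsGeodesicOn (γ : ℝ → X) (s : Set ℝ) : Prop :=
  ∀ t ∈ s, ∀ u ∈ s, dist (γ t) (γ u) = |t - u|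

/-- `X` is a geodesic metric space. -/
def GeodesicSpace (X : Type*) [MetricSpace X] : Prop :=
  ∀ x y : X, ∃ γ : ℝ → X, γ 0 = x ∧ γ (dist x y) = y ∧ IsGeodesicOn γ (Icc 0 (dist x y))

/-- The path `γ` (defined on the parameter set `s`) is `M`-Morse: every `(L,e)`-quasi-geodesic
(`L ≥ 1`, `e ≥ 0`) with endpoints on `γ` stays in the closed `M L e`-neighbourhood of `γ`. -/
def IsMorseOn (M : MorseGauge) (γ : ℝ → X) (s : Set ℝ) : Prop :=
  ∀ L e, 1 ≤ L → 0 ≤ e → ∀ (η : ℝ → X) (a b : ℝ), a ≤ b →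
    IsQGOn L e η (Icc a b) → η a ∈ γ '' s → η b ∈ γ '' s →
    ∀ t ∈ Icc a b, ∃ u ∈ s, dist (η t) (γ u) ≤ M L e

/-- The constant `δ_M` associated to a Morse gauge `M`. -/
noncomputable def deltaM (M : MorseGauge) : ℝ :=
  max (4 * M 1 (2 * M 5 0) + 2 * M 5 0) (8 * M 3 0)

/-- A geodesic ray from the basepoint `e`. -/
def IsRayFrom (e : X) (γ : ℝ → X) : Prop :=
  γ 0 = e ∧ IsGeodesicOn γ (Ici 0)

open Filter Metric

def IsCoarseLipschitzOn (L e : ℝ) (γ : ℝ → X) (s : Set ℝ) : Prop :=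
  ∀ x ∈ s, ∀ y ∈ s, dist (γ x) (γ y) ≤ L * |x - y| + e

section Paths

variable {γ γ' : ℝ → X} {L e : ℝ} {s : Set ℝ}

namespace IsGeodesicOn

lemma mono {t : Set ℝ} (h : IsGeodesicOn γ s) (hts : t ⊆ s) : IsGeodesicOn γ t :=
  fun x hx y hy => h x (hts hx) y (hts hy)

lemma congr (h : IsGeodesicOn γ s) (heq : EqOn γ' γ s) : IsGeodesicOn γ' s := by
  intro x hx y hy
  rw [heq hx, heq hy]
  exact h x hx y hy

lemma comp_sub_const {a b : ℝ} (h : IsGeodesicOn γ (Icc a b)) (c : ℝ) :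
    IsGeodesicOn (fun x => γ (x - c)) (Icc (a + c) (b + c)) := by
  intro x hx y hy
  rw [h (x - c) ⟨by linarith [hx.1], by linarith [hx.2]⟩ (y - c)
    ⟨by linarith [hy.1], by linarith [hy.2]⟩, sub_sub_sub_cancel_right]

lemma dist_of_le (h : IsGeodesicOn γ s) {x y : ℝ} (hx : x ∈ s) (hy : y ∈ s) (hxy : x ≤ y) :
    dist (γ x) (γ y) = y - x := by
  rw [h x hx y hy, abs_sub_comm, abs_of_nonneg (sub_nonneg.2 hxy)]

lemma isCoarseLipschitzOn (h : IsGeodesicOn γ s) (hL : 1 ≤ L) (he : 0 ≤ e) :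
    IsCoarseLipschitzOn L e γ s := by
  intro x hx y hy
  rw [h x hx y hy]
  nlinarith [abs_nonneg (x - y)]

lemma isQGOn (h : IsGeodesicOn γ s) : IsQGOn 1 0 γ s := by
  intro x hx y hy
  simp [h x hx y hy]

end IsGeodesicOn

lemma IsQGOn.congr (h : IsQGOn L e γ s) (heq : EqOn γ' γ s) : IsQGOn L e γ' s := by
  intro x hx y hy
  rw [heq hx, heq hy]
  exact h x hx y hy

lemma IsQGOn.isCoarseLipschitzOn (h : IsQGOn L e γ s) : IsCoarseLipschitzOn L e γ s :=
  fun x hx y hy => (h x hx y hy).2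

lemma isQGOn_of_le (hlow : ∀ x ∈ s, ∀ y ∈ s, x ≤ y → (1 / L) * (y - x) - e ≤ dist (γ x) (γ y))
    (hup : IsCoarseLipschitzOn L e γ s) : IsQGOn L e γ s := by
  intro x hx y hy
  refine ⟨?_, hup x hx y hy⟩
  rcases le_total x y with hxy | hyx
  · rw [abs_sub_comm, abs_of_nonneg (sub_nonneg.2 hxy)]
    exact hlow x hx y hy hxy
  · rw [abs_of_nonneg (sub_nonneg.2 hyx), dist_comm]
    exact hlow y hy x hx hyx

lemma IsCoarseLipschitzOn.union_Icc {e₁ e₂ a b c : ℝ}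
    (h₁ : IsCoarseLipschitzOn L e₁ γ (Icc a b)) (h₂ : IsCoarseLipschitzOn L e₂ γ (Icc b c))
    (he₁ : 0 ≤ e₁) (he₂ : 0 ≤ e₂) : IsCoarseLipschitzOn L (e₁ + e₂) γ (Icc a c) := by
  intro x hx y hy
  wlog hxy : x ≤ y generalizing x y
  · rw [dist_comm, abs_sub_comm]
    exact this y hy x hx (le_of_not_ge hxy)
  rcases le_total y b with hyb | hby
  · linarith [h₁ x ⟨hx.1, hxy.trans hyb⟩ y ⟨hx.1.trans hxy, hyb⟩]
  rcases le_total b x with hbx | hxb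
  · linarith [h₂ x ⟨hbx, hxy.trans hy.2⟩ y ⟨hbx.trans hxy, hy.2⟩]
  have hxb' := h₁ x ⟨hx.1, hxb⟩ b ⟨hx.1.trans hxb, le_rfl⟩
  have hby' := h₂ b ⟨le_rfl, hby.trans hy.2⟩ y ⟨hby, hy.2⟩
  rw [abs_of_nonpos (sub_nonpos.2 hxb)] at hxb'
  rw [abs_of_nonpos (sub_nonpos.2 hby)] at hby'
  rw [abs_of_nonpos (sub_nonpos.2 hxy)]
  linarith [dist_triangle (γ x) (γ b) (γ y)]

variable {a b d₀ d₁ : ℝ}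

lemma IsCoarseLipschitzOn.of_geodesic_caps (h : IsCoarseLipschitzOn L e γ (Icc a b))
    (h₀ : IsGeodesicOn γ (Icc (a - d₀) a)) (h₁ : IsGeodesicOn γ (Icc b (b + d₁)))
    (hL : 1 ≤ L) (he : 0 ≤ e) : IsCoarseLipschitzOn L e γ (Icc (a - d₀) (b + d₁)) := by
  simpa using ((h₀.isCoarseLipschitzOn hL le_rfl).union_Icc h le_rfl he).union_Icc
    (h₁.isCoarseLipschitzOn hL le_rfl) (by linarith) le_rfl

lemma exists_dist_eq_abs_of_geodesic_caps (h₀ : IsGeodesicOn γ (Icc (a - d₀) a))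
    (h₁ : IsGeodesicOn γ (Icc b (b + d₁))) (hab : a ≤ b) (hd₀ : 0 ≤ d₀) {x : ℝ}
    (hx : x ∈ Icc (a - d₀) (b + d₁)) :
    ∃ x' ∈ Icc a b, dist (γ x) (γ x') = |x - x'| ∧ |x - x'| ≤ max d₀ d₁ := by
  rcases lt_or_ge x a with hxa | hax
  · refine ⟨a, left_mem_Icc.2 hab, h₀ x ⟨hx.1, hxa.le⟩ a ⟨hx.1.trans hxa.le, le_rfl⟩, ?_⟩
    rw [abs_of_neg (by linarith)]
    exact le_max_of_le_left (by linarith [hx.1])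
  rcases le_or_gt x b with hxb | hbx
  · exact ⟨x, ⟨hax, hxb⟩, by simp, by simp [hd₀]⟩
  · refine ⟨b, right_mem_Icc.2 hab, h₁ x ⟨hbx.le, hx.2⟩ b ⟨le_rfl, hbx.le.trans hx.2⟩, ?_⟩
    rw [abs_of_pos (by linarith)]
    exact le_max_of_le_right (by linarith [hx.2])

lemma IsQGOn.of_geodesic_caps {D : ℝ} (h : IsQGOn L e γ (Icc a b))
    (h₀ : IsGeodesicOn γ (Icc (a - d₀) a)) (h₁ : IsGeodesicOn γ (Icc b (b + d₁)))
    (hL : 1 ≤ L) (he : 0 ≤ e) (hab : a ≤ b) (hd₀ : 0 ≤ d₀) (hD₀ : d₀ ≤ D) (hD₁ : d₁ ≤ D) :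
    IsQGOn L (e + 4 * D) γ (Icc (a - d₀) (b + d₁)) := by
  have hup := h.isCoarseLipschitzOn.of_geodesic_caps h₀ h₁ hL he
  intro x hx y hy
  refine ⟨?_, by linarith [hup x hx y hy]⟩
  obtain ⟨x', hx', hxx', hx'D⟩ := exists_dist_eq_abs_of_geodesic_caps h₀ h₁ hab hd₀ hx
  obtain ⟨y', hy', hyy', hy'D⟩ := exists_dist_eq_abs_of_geodesic_caps h₀ h₁ hab hd₀ hy
  have hmax : max d₀ d₁ ≤ D := max_le hD₀ hD₁
  have hinv₀ : 0 ≤ 1 / L := by positivity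
  have hinv₁ : 1 / L ≤ 1 := by rw [div_le_one (by linarith)]; exact hL
  have hshift : (1 / L) * |x - y| ≤ (1 / L) * |x' - y'| + (|x - x'| + |y - y'|) :=
    calc (1 / L) * |x - y| ≤ (1 / L) * (|x' - y'| + (|x - x'| + |y - y'|)) := by
          gcongr
          linarith [abs_sub_le x x' y, abs_sub_le x' y' y, abs_sub_comm y' y]
      _ ≤ (1 / L) * |x' - y'| + (|x - x'| + |y - y'|) := by
          rw [mul_add]
          gcongr
          exact mul_le_of_le_one_left (by positivity) hinv₁
  have htri := dist_triangle4 (γ x') (γ x) (γ y) (γ y')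
  rw [dist_comm (γ x') (γ x), hxx', hyy'] at htri
  linarith [(h x' hx' y' hy').1]

lemma isQGOn_three_of_geodesic_caps {ε : ℝ} (h₀ : IsGeodesicOn γ (Icc (a - d₀) a))
    (h : IsGeodesicOn γ (Icc a b)) (h₁ : IsGeodesicOn γ (Icc b (b + d₁))) (hε : 0 ≤ ε)
    (hlen : 2 * (d₀ + d₁) ≤ b - a)
    (hfar : ∀ w ∈ Icc a b, d₀ - ε ≤ dist (γ w) (γ (a - d₀)) ∧ d₁ - ε ≤ dist (γ w) (γ (b + d₁))) :
    IsQGOn 3 ε γ (Icc (a - d₀) (b + d₁)) := by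
  refine isQGOn_of_le ?_ ((h.isCoarseLipschitzOn (by norm_num) hε).of_geodesic_caps h₀ h₁
    (by norm_num) hε)
  intro x hx y hy hxy
  rcases le_total x a with hxa | hax
  · have hxa' : dist (γ x) (γ a) = a - x := h₀.dist_of_le ⟨hx.1, hxa⟩ ⟨hx.1.trans hxa, le_rfl⟩ hxa
    rcases le_total y a with hya | hay
    · linarith [h₀.dist_of_le ⟨hx.1, hxa⟩ ⟨hx.1.trans hxy, hya⟩ hxy]
    rcases le_total y b with hyb | hby
    · have hay' := h.dist_of_le ⟨le_rfl, hay.trans hyb⟩ ⟨hay, hyb⟩ hay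
      have hx₀ := h₀.dist_of_le ⟨le_rfl, hx.1.trans hxa⟩ ⟨hx.1, hxa⟩ hx.1
      have hfar_y := (hfar y ⟨hay, hyb⟩).1
      linarith [dist_triangle (γ a) (γ x) (γ y), dist_triangle (γ y) (γ x) (γ (a - d₀)),
        dist_comm (γ a) (γ x), dist_comm (γ y) (γ x), dist_comm (γ (a - d₀)) (γ x)]
    · have hab : a ≤ b := by linarith [hx.1, hy.2]
      have hab' := h.dist_of_le ⟨le_rfl, hab⟩ ⟨hab, le_rfl⟩ hab
      have hby' := h₁.dist_of_le ⟨le_rfl, hby.trans hy.2⟩ ⟨hby, hy.2⟩ hby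
      linarith [dist_triangle4 (γ a) (γ x) (γ y) (γ b), dist_comm (γ a) (γ x),
        dist_comm (γ y) (γ b), hx.1, hy.2]
  rcases le_total y b with hyb | hby
  · linarith [h.dist_of_le ⟨hax, hxy.trans hyb⟩ ⟨hax.trans hxy, hyb⟩ hxy]
  rcases le_total x b with hxb | hbx
  · have hxb' := h.dist_of_le ⟨hax, hxb⟩ ⟨hax.trans hxb, le_rfl⟩ hxb
    have hby' := h₁.dist_of_le ⟨le_rfl, hby.trans hy.2⟩ ⟨hby, hy.2⟩ hby
    have hy₁ := h₁.dist_of_le ⟨hby, hy.2⟩ ⟨hby.trans hy.2, le_rfl⟩ hy.2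
    have hfar_x := (hfar x ⟨hax, hxb⟩).2
    linarith [dist_triangle (γ x) (γ y) (γ b), dist_triangle (γ x) (γ y) (γ (b + d₁)),
      dist_comm (γ b) (γ y)]
  · linarith [h₁.dist_of_le ⟨hbx, hxy.trans hy.2⟩ ⟨hbx.trans hxy, hy.2⟩ hxy]

lemma GeodesicSpace.exists_geodesic_caps (hX : GeodesicSpace X) (η : ℝ → X) {a b : ℝ}
    (hab : a ≤ b) (p q : X) :
    ∃ η' : ℝ → X, EqOn η' η (Icc a b) ∧ IsGeodesicOn η' (Icc (a - dist (η a) p) a) ∧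
      IsGeodesicOn η' (Icc b (b + dist (η b) q)) ∧
      η' (a - dist (η a) p) = p ∧ η' (b + dist (η b) q) = q := by
  obtain ⟨γ₀, hγ₀p, hγ₀a, hγ₀⟩ := hX p (η a)
  obtain ⟨γ₁, hγ₁b, hγ₁q, hγ₁⟩ := hX (η b) q
  rw [dist_comm] at hγ₀a hγ₀
  set d₀ := dist (η a) p
  set d₁ := dist (η b) q
  let η' x := if x < a then γ₀ (x - (a - d₀)) else if x ≤ b then η x else γ₁ (x - b)
  have hleft : EqOn η' (fun x => γ₀ (x - (a - d₀))) (Icc (a - d₀) a) := by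
    intro x hx
    rcases hx.2.lt_or_eq with hxa | rfl
    · simp [η', hxa]
    · simp [η', hab, hγ₀a]
  have hright : EqOn η' (fun x => γ₁ (x - b)) (Icc b (b + d₁)) := by
    intro x hx
    rcases hx.1.lt_or_eq with hbx | rfl
    · simp [η', hbx.not_ge, (hab.trans_lt hbx).not_gt]
    · simp [η', hab.not_gt, hγ₁b]
  have hd₀ : 0 ≤ d₀ := dist_nonneg
  have hd₁ : 0 ≤ d₁ := dist_nonneg
  refine ⟨η', fun x hx => by simp [η', hx.1.not_gt, hx.2], ?_, ?_, ?_, ?_⟩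
  · exact IsGeodesicOn.congr (by simpa using hγ₀.comp_sub_const (a - d₀)) hleft
  · exact IsGeodesicOn.congr (by simpa [add_comm] using hγ₁.comp_sub_const b) hright
  · rw [hleft ⟨le_rfl, by linarith⟩]
    simp [hγ₀p]
  · rw [hright ⟨by linarith, le_rfl⟩]
    simp [hγ₁q]

end Paths

namespace IsMorseOn

variable {M : MorseGauge} {ξ ζ : ℝ → X} {s : Set ℝ}

lemma exists_dist_le_of_isQGOn (hX : GeodesicSpace X) (hM : IsMorseOn M ξ s) {η : ℝ → X}
    {L e D a b : ℝ} (hη : IsQGOn L e η (Icc a b)) (hab : a ≤ b) (hL : 1 ≤ L) (he : 0 ≤ e)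
    {p q : X} (hp : p ∈ ξ '' s) (hq : q ∈ ξ '' s) (hpD : dist (η a) p ≤ D)
    (hqD : dist (η b) q ≤ D) :
    ∀ t ∈ Icc a b, ∃ σ ∈ s, dist (η t) (ξ σ) ≤ M L (e + 4 * D) := by
  obtain ⟨η', heq, h₀, h₁, hp', hq'⟩ := hX.exists_geodesic_caps η hab p q
  have hd₀ : 0 ≤ dist (η a) p := dist_nonneg
  have hd₁ : 0 ≤ dist (η b) q := dist_nonneg
  have hη' := (hη.congr heq).of_geodesic_caps h₀ h₁ hL he hab hd₀ hpD hqD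
  intro t ht
  obtain ⟨σ, hσ, hd⟩ := hM L _ hL (by linarith) η' _ _ (by linarith) hη' (hp'.symm ▸ hp)
    (hq'.symm ▸ hq) t ⟨by linarith [ht.1], by linarith [ht.2]⟩
  exact ⟨σ, hσ, heq ht ▸ hd⟩

lemma exists_dist_le_of_far (hX : GeodesicSpace X) (hM : IsMorseOn M ξ s) {u v ε : ℝ}
    (hζ : IsGeodesicOn ζ (Icc u v)) (hε : 0 ≤ ε) {p q : X} (hp : p ∈ ξ '' s) (hq : q ∈ ξ '' s)
    (hlen : 2 * (dist (ζ u) p + dist (ζ v) q) ≤ v - u)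
    (hfar : ∀ w ∈ Icc u v, dist (ζ u) p - ε ≤ dist (ζ w) p ∧ dist (ζ v) q - ε ≤ dist (ζ w) q) :
    ∀ t ∈ Icc u v, ∃ σ ∈ s, dist (ζ t) (ξ σ) ≤ M 3 ε := by
  have hd₀ : 0 ≤ dist (ζ u) p := dist_nonneg
  have hd₁ : 0 ≤ dist (ζ v) q := dist_nonneg
  have huv : u ≤ v := by linarith
  obtain ⟨η', heq, h₀, h₁, hp', hq'⟩ := hX.exists_geodesic_caps ζ huv p q
  have hη' := isQGOn_three_of_geodesic_caps h₀ (hζ.congr heq) h₁ hε hlen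
    (fun w hw => by rw [heq hw, hp', hq']; exact hfar w hw)
  intro t ht
  obtain ⟨σ, hσ, hd⟩ := hM 3 ε (by norm_num) hε η' _ _ (by linarith) hη' (hp'.symm ▸ hp)
    (hq'.symm ▸ hq) t ⟨by linarith [ht.1], by linarith [ht.2]⟩
  exact ⟨σ, hσ, heq ht ▸ hd⟩

lemma frequently_exists_dist_le (hX : GeodesicSpace X) (hM : IsMorseOn M ξ s)
    (hζ : IsGeodesicOn ζ (Ici 0)) {C : ℝ} (hC : ∀ t ≥ 0, ∃ σ ∈ s, dist (ζ t) (ξ σ) ≤ C) :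
    ∃ᶠ u in atTop, ∃ σ ∈ s, dist (ζ u) (ξ σ) ≤ M 3 1 := by
  obtain ⟨σ₀, hσ₀, -⟩ := hC 0 le_rfl
  have hS : (ξ '' s).Nonempty := ⟨_, σ₀, hσ₀, rfl⟩
  set f := fun t => infDist (ζ t) (ξ '' s)
  have hbdd : IsBoundedUnder (· ≥ ·) atTop f :=
    isBoundedUnder_of_eventually_ge (Eventually.of_forall fun _ => infDist_nonneg)
  have hcobdd : IsCoboundedUnder (· ≥ ·) atTop f :=
    isCoboundedUnder_ge_of_eventually_le atTop ((eventually_ge_atTop 0).mono fun t ht =>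
      let ⟨σ, hσ, h⟩ := hC t ht; (infDist_le_dist_of_mem (mem_image_of_mem ξ hσ)).trans h)
  set m := liminf f atTop
  obtain ⟨T₁, hT₁⟩ :=
    eventually_atTop.1 (eventually_lt_of_lt_liminf (by linarith : m - 1/2 < m) hbdd)
  have hlow := frequently_atTop.1 (frequently_lt_of_liminf_lt hcobdd (by linarith : m < m + 1/2))
  rw [frequently_atTop]
  intro T
  obtain ⟨u, hu, hfu⟩ := hlow (max T (max T₁ 0))
  obtain ⟨v, hv, hfv⟩ := hlow (u + 4 * (m + 1/2))
  obtain ⟨p, hp, hpu⟩ := (infDist_lt_iff hS).1 hfu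
  obtain ⟨q, hq, hqv⟩ := (infDist_lt_iff hS).1 hfv
  have hT₁u : T₁ ≤ u := le_of_max_le_left (le_of_max_le_right hu)
  have hu₀ : 0 ≤ u := le_of_max_le_right (le_of_max_le_right hu)
  have hfar : ∀ w ∈ Icc u v, m - 1/2 < dist (ζ w) p ∧ m - 1/2 < dist (ζ w) q := fun w hw =>
    ⟨(hT₁ w (hT₁u.trans hw.1)).trans_le (infDist_le_dist_of_mem hp),
      (hT₁ w (hT₁u.trans hw.1)).trans_le (infDist_le_dist_of_mem hq)⟩
  obtain ⟨σ, hσ, h⟩ := hM.exists_dist_le_of_far (u := u) (v := v) hX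
    (hζ.mono (Icc_subset_Ici_self.trans (Ici_subset_Ici.2 hu₀))) zero_le_one hp hq
    (by linarith) (fun w hw => ⟨by linarith [hfar w hw], by linarith [hfar w hw]⟩) u
    ⟨le_rfl, by linarith [dist_nonneg (x := ζ u) (y := p)]⟩
  exact ⟨u, le_of_max_le_left hu, σ, hσ, h⟩

lemma forall_exists_dist_le_of_frequently (hX : GeodesicSpace X) (hM : IsMorseOn M ξ s)
    (hζ : IsGeodesicOn ζ (Ici 0)) (h₀ : ζ 0 ∈ ξ '' s) {K : ℝ}
    (hfreq : ∃ᶠ u in atTop, ∃ σ ∈ s, dist (ζ u) (ξ σ) ≤ K) :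
    ∀ t ≥ 0, ∃ σ ∈ s, dist (ζ t) (ξ σ) ≤ M 1 (4 * K) := by
  intro t ht
  obtain ⟨v, hv, σ, hσ, hvσ⟩ := frequently_atTop.1 hfreq t
  obtain ⟨σ', hσ', h⟩ := hM.exists_dist_le_of_isQGOn hX (hζ.mono Icc_subset_Ici_self).isQGOn
    (ht.trans hv) le_rfl le_rfl h₀ (mem_image_of_mem ξ hσ) (by simpa using dist_nonneg.trans hvσ)
    hvσ t ⟨ht, hv⟩
  exact ⟨σ', hσ', by simpa using h⟩

lemma of_forall_dist_le (hX : GeodesicSpace X) (hM : IsMorseOn M ξ s) {D : ℝ}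
    (hD : ∀ t ∈ s, dist (ξ t) (ζ t) ≤ D) :
    IsMorseOn (fun L e => M L (e + 4 * D) + D) ζ s := by
  rintro L e hL he η a b hab hη ⟨u₀, hu₀, h₀⟩ ⟨u₁, hu₁, h₁⟩ t ht
  obtain ⟨σ, hσ, hd⟩ := hM.exists_dist_le_of_isQGOn (D := D) hX hη hab hL he
    (mem_image_of_mem ξ hu₀) (mem_image_of_mem ξ hu₁) (by rw [← h₀, dist_comm]; exact hD u₀ hu₀)
    (by rw [← h₁, dist_comm]; exact hD u₁ hu₁) t ht
  exact ⟨σ, hσ, (dist_triangle _ _ _).trans (add_le_add hd (hD σ hσ))⟩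

end IsMorseOn

namespace IsRayFrom

variable {e : X} {γ ξ ζ : ℝ → X}

lemma dist_basepoint (h : IsRayFrom e γ) {t : ℝ} (ht : 0 ≤ t) : dist (γ t) e = t := by
  rw [← h.1, h.2 t ht 0 self_mem_Ici, sub_zero, abs_of_nonneg ht]

lemma dist_le_two_mul (hξ : IsRayFrom e ξ) (hζ : IsRayFrom e ζ) {t σ R : ℝ} (ht : 0 ≤ t)
    (hσ : 0 ≤ σ) (h : dist (ζ t) (ξ σ) ≤ R) : dist (ξ t) (ζ t) ≤ 2 * R := by
  have hts : |σ - t| ≤ R := by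
    simpa [hξ.dist_basepoint hσ, hζ.dist_basepoint ht, dist_comm] using
      (abs_dist_sub_le (ξ σ) (ζ t) e).trans (h.trans_eq' (dist_comm _ _))
  calc dist (ξ t) (ζ t) ≤ dist (ξ t) (ξ σ) + dist (ξ σ) (ζ t) := dist_triangle _ _ _
    _ = |σ - t| + dist (ζ t) (ξ σ) := by rw [hξ.2 t ht σ hσ, abs_sub_comm, dist_comm]
    _ ≤ 2 * R := by linarith

end IsRayFrom

/-- any geodesic ray from `e` representing an `M`-Morse direction (i.e. at
bounded distance from an `M`-Morse ray from `e`) is `M_C`-Morse, where `M_C` depends only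
on `M`. -/
theorem stmt13 (M : MorseGauge) :
    ∃ MC : MorseGauge,
      ∀ (X : Type) (_ : MetricSpace X) (_ : ProperSpace X), GeodesicSpace X →
        ∀ (e : X) (ξ ζ : ℝ → X),
          IsRayFrom e ξ → IsMorseOn M ξ (Ici 0) →
          IsRayFrom e ζ →
          (∃ C, ∀ t ≥ (0 : ℝ), dist (ξ t) (ζ t) ≤ C) →
          IsMorseOn MC ζ (Ici 0) := by
  refine ⟨fun L c => M L (c + 4 * (2 * M 1 (4 * M 3 1))) + 2 * M 1 (4 * M 3 1), ?_⟩
  intro X _ _ hX e ξ ζ hξ hM hζ ⟨C, hC⟩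
  have hfreq := hM.frequently_exists_dist_le hX hζ.2 fun t ht =>
    ⟨t, ht, (dist_comm (ζ t) (ξ t)).trans_le (hC t ht)⟩
  have hnear := hM.forall_exists_dist_le_of_frequently hX hζ.2
    ⟨0, self_mem_Ici, hξ.1.trans hζ.1.symm⟩ hfreq
  exact hM.of_forall_dist_le hX fun t ht =>
    let ⟨σ, hσ, h⟩ := hnear t ht
    hξ.dist_le_two_mul hζ ht hσ h
end

section
/- The fundamental system of neighbourhoods {V^M_k(a)}_{k∈ℕ} on the combinatorial M-Morse boundary of a free product satisfies the filter axioms: (1) a ∈ V^M_k(a) for all k; (2) for all i,j there is k with V^M_k(a) ⊂ V^M_i(a) ∩ V^M_j(a); (3) for every i there is j such that for every b ∈ V^M_j(a) there exists k with V^M_k(b) ⊂ V^M_i(a). -/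
open Set

/-- A list of letters from `S ∪ S⁻¹`. -/
def IsWordOver {G : Type*} [Group G] (S : Set G) (l : List G) : Prop :=
  ∀ x ∈ l, x ∈ S ∨ x⁻¹ ∈ S

/-- The word metric on `G` associated to the generating set `S`. -/
noncomputable def wordDist {G : Type*} [Group G] (S : Set G) (x y : G) : ℝ :=
  sInf {r : ℝ | ∃ l : List G, IsWordOver S l ∧ l.prod = x⁻¹ * y ∧ r = l.length}

section NatPaths

variable {G : Type*}

/-- A discrete `(L,e)`-quasi-geodesic (with respect to the distance function `d`),
parametrised over a set of naturals. -/
def IsQGOnN (d : G → G → ℝ) (L e : ℝ) (γ : ℕ → G) (s : Set ℕ) : Prop :=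
  ∀ i ∈ s, ∀ j ∈ s,
    (1 / L) * |(i : ℝ) - (j : ℝ)| - e ≤ d (γ i) (γ j) ∧
      d (γ i) (γ j) ≤ L * |(i : ℝ) - (j : ℝ)| + e

/-- A discrete geodesic with respect to `d`. -/
def IsGeodesicOnN (d : G → G → ℝ) (γ : ℕ → G) (s : Set ℕ) : Prop :=
  ∀ i ∈ s, ∀ j ∈ s, d (γ i) (γ j) = |(i : ℝ) - (j : ℝ)|

/-- The (discrete) path `γ` on `s` is `M`-Morse with respect to `d`. -/
def IsMorseOnN (d : G → G → ℝ) (M : MorseGauge) (γ : ℕ → G) (s : Set ℕ) : Prop :=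
  ∀ L e, 1 ≤ L → 0 ≤ e → ∀ (η : ℕ → G) (a b : ℕ), a ≤ b →
    IsQGOnN d L e η (Icc a b) → η a ∈ γ '' s → η b ∈ γ '' s →
    ∀ i ∈ Icc a b, ∃ j ∈ s, d (η i) (γ j) ≤ M L e

/-- A Morse geodesic ray from the basepoint `o`. -/
def IsMorseRayN (d : G → G → ℝ) (o : G) (γ : ℕ → G) : Prop :=
  γ 0 = o ∧ IsGeodesicOnN d γ univ ∧ ∃ M, IsMorseOnN d M γ univ

/-- The type of Morse geodesic rays from `o`. -/
def MRayN (d : G → G → ℝ) (o : G) := {γ : ℕ → G // IsMorseRayN d o γ}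

/-- The Morse boundary: Morse rays from `o` up to bounded (Hausdorff) distance. -/
def MorseBoundaryN (d : G → G → ℝ) (o : G) :=
  Quot (fun γ γ' : MRayN d o => ∃ C, ∀ i, d (γ.1 i) (γ'.1 i) ≤ C)

/-- `z` is an `M`-Morse direction: it admits an `M`-Morse realization. -/
def MorseDirN (d : G → G → ℝ) (o : G) (M : MorseGauge) (z : MorseBoundaryN d o) : Prop :=
  ∃ γ : MRayN d o, IsMorseOnN d M γ.1 univ ∧ Quot.mk _ γ = z

/-- The `M`-Morse stratum `∂^M` of the Morse boundary. -/
def stratumN (d : G → G → ℝ) (o : G) (M : MorseGauge) : Set (MorseBoundaryN d o) :=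
  {z | MorseDirN d o M z}

/-- The neighbourhood `U_{M,n}(z)` in the `M`-Morse stratum: classes of `M`-Morse rays
that `δ_M`-fellow-travel every `M`-Morse realization of `z` up to time `n`. -/
def UN (d : G → G → ℝ) (o : G) (M : MorseGauge) (n : ℕ) (z : MorseBoundaryN d o) :
    Set (MorseBoundaryN d o) :=
  {w | ∃ η : MRayN d o, Quot.mk _ η = w ∧ IsMorseOnN d M η.1 univ ∧
        ∀ ξ : MRayN d o, IsMorseOnN d M ξ.1 univ → Quot.mk _ ξ = z →
          ∀ t ≤ n, d (η.1 t) (ξ.1 t) < deltaM M}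

/-- The direct-limit topology on the Morse boundary: a set is open iff its intersection
with every stratum is open for the neighbourhood-basis topology of that stratum. -/
def morseTopologyN (d : G → G → ℝ) (o : G) : TopologicalSpace (MorseBoundaryN d o) where
  IsOpen O := ∀ M z, z ∈ O → MorseDirN d o M z → ∃ n, UN d o M n z ∩ stratumN d o M ⊆ O
  isOpen_univ := by intro M z _ _; exact ⟨0, fun w _ => trivial⟩
  isOpen_inter := by
    intro O₁ O₂ h₁ h₂ M z hz hM
    obtain ⟨n₁, hn₁⟩ := h₁ M z hz.1 hM
    obtain ⟨n₂, hn₂⟩ := h₂ M z hz.2 hM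
    refine ⟨max n₁ n₂, fun w hw => ⟨hn₁ ⟨?_, hw.2⟩, hn₂ ⟨?_, hw.2⟩⟩⟩
    · obtain ⟨η, h1, h2, h3⟩ := hw.1
      exact ⟨η, h1, h2, fun ξ a b t ht => h3 ξ a b t (ht.trans (le_max_left _ _))⟩
    · obtain ⟨η, h1, h2, h3⟩ := hw.1
      exact ⟨η, h1, h2, fun ξ a b t ht => h3 ξ a b t (ht.trans (le_max_right _ _))⟩
  isOpen_sUnion := by
    intro S hS M z hz hM
    obtain ⟨O, hO, hzO⟩ := hz
    obtain ⟨n, hn⟩ := hS O hO M z hzO hM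
    exact ⟨n, fun w hw => ⟨O, hO, hn hw⟩⟩

/-- `x ∈ G` is an `M`-Morse point: some geodesic from `o` to `x` is `M`-Morse. -/
def MorsePtN (d : G → G → ℝ) (o : G) (M : MorseGauge) (x : G) : Prop :=
  ∃ (n : ℕ) (γ : ℕ → G), γ 0 = o ∧ γ n = x ∧
    IsGeodesicOnN d γ (Iic n) ∧ IsMorseOnN d M γ (Iic n)

/-- Membership of the point `x` in the filled neighbourhood `Û_{M,k}(z)`. -/
def InFilledPtN (d : G → G → ℝ) (o : G) (M : MorseGauge) (k : ℕ)
    (z : MorseBoundaryN d o) (x : G) : Prop :=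
  ∃ (n : ℕ) (γ : ℕ → G), k ≤ n ∧ γ 0 = o ∧ γ n = x ∧
    IsGeodesicOnN d γ (Iic n) ∧ IsMorseOnN d M γ (Iic n) ∧
    ∀ ξ : MRayN d o, IsMorseOnN d M ξ.1 univ → Quot.mk _ ξ = z →
      ∀ t ≤ k, d (γ t) (ξ.1 t) < deltaM M

end NatPaths
open Monoid

section FreeProduct

variable {A B : Type*} [Group A] [Group B]

/-- A syllable viewed inside the free product `A ∗ B`. -/
def sylElem : A ⊕ B → Monoid.Coprod A B
  | Sum.inl a => Monoid.Coprod.inl a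
  | Sum.inr b => Monoid.Coprod.inr b

/-- The generating set of `A ∗ B` induced by `S_A` and `S_B`. -/
def fpGens (SA : Set A) (SB : Set B) : Set (Monoid.Coprod A B) :=
  (fun a : A => (Monoid.Coprod.inl a : Monoid.Coprod A B)) '' SA ∪
    (fun b : B => (Monoid.Coprod.inr b : Monoid.Coprod A B)) '' SB

/-- A syllable is a Morse point of its factor. -/
def MorsePtSum (dA : A → A → ℝ) (dB : B → B → ℝ) (M : MorseGauge) : A ⊕ B → Prop
  | Sum.inl a => MorsePtN dA 1 M a
  | Sum.inr b => MorsePtN dB 1 M b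

/-- A Morse direction of one of the two factors is `M`-Morse. -/
def MorseDirSum (dA : A → A → ℝ) (dB : B → B → ℝ) (M : MorseGauge) :
    MorseBoundaryN dA (1 : A) ⊕ MorseBoundaryN dB (1 : B) → Prop
  | Sum.inl z => MorseDirN dA 1 M z
  | Sum.inr z => MorseDirN dB 1 M z

/-- Conditions on an infinite syllable sequence: starts in `A`, alternates, and all
syllables except possibly the first are nontrivial. -/
def SylSeqOK (u : ℕ → A ⊕ B) : Prop :=
  (u 0).isLeft = true ∧ (∀ i, (u i).isLeft ≠ (u (i + 1)).isLeft) ∧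
    ∀ i, 1 ≤ i → u i ≠ Sum.inl (1 : A) ∧ u i ≠ Sum.inr (1 : B)

/-- Conditions on a finite syllable list: starts in `A`, alternates, and all syllables
except possibly the first are nontrivial. -/
def SylListOK (l : List (A ⊕ B)) : Prop :=
  (∀ x ∈ l.head?, x.isLeft = true) ∧ l.Chain' (fun x y => x.isLeft ≠ y.isLeft) ∧
    ∀ x ∈ l.tail, x ≠ Sum.inl (1 : A) ∧ x ≠ Sum.inr (1 : B)

/-- A combinatorial Morse geodesic of infinite type. -/
structure CombInf (dA : A → A → ℝ) (dB : B → B → ℝ) : Type _ where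
  u : ℕ → A ⊕ B
  ok : SylSeqOK u
  morse : ∃ M : MorseGauge, ∀ i, MorsePtSum dA dB M (u i)

/-- A combinatorial Morse geodesic of finite type. -/
structure CombFin (dA : A → A → ℝ) (dB : B → B → ℝ) : Type _ where
  l : List (A ⊕ B)
  z : MorseBoundaryN dA (1 : A) ⊕ MorseBoundaryN dB (1 : B)
  ok : SylListOK l
  parity : Even l.length ↔ z.isLeft = true
  morse : ∃ M : MorseGauge, (∀ x ∈ l, MorsePtSum dA dB M x) ∧ MorseDirSum dA dB M z

/-- The combinatorial Morse boundary of the free product. -/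
def CombBoundary (dA : A → A → ℝ) (dB : B → B → ℝ) : Type _ :=
  CombInf dA dB ⊕ CombFin dA dB

/-- The prefix product `v_i` of the first `i` syllables of an infinite sequence. -/
def sylProd (u : ℕ → A ⊕ B) (i : ℕ) : Monoid.Coprod A B :=
  ((List.range i).map (fun j => sylElem (u j))).prod

/-- The prefix product of the first `i` syllables of a finite list. -/
def sylProdL (l : List (A ⊕ B)) (i : ℕ) : Monoid.Coprod A B :=
  ((l.take i).map sylElem).prod

end FreeProduct

section Statement14

variable {A B : Type*} [Group A] [Group B]

/-- A combinatorial `M`-Morse geodesic of infinite type. -/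
structure CombInfM (dA : A → A → ℝ) (dB : B → B → ℝ) (M : MorseGauge) : Type _ where
  u : ℕ → A ⊕ B
  ok : SylSeqOK u
  morse : ∀ i, MorsePtSum dA dB M (u i)

/-- A combinatorial `M`-Morse geodesic of finite type. -/
structure CombFinM (dA : A → A → ℝ) (dB : B → B → ℝ) (M : MorseGauge) : Type _ where
  l : List (A ⊕ B)
  z : MorseBoundaryN dA (1 : A) ⊕ MorseBoundaryN dB (1 : B)
  ok : SylListOK l
  parity : Even l.length ↔ z.isLeft = true
  morse : (∀ x ∈ l, MorsePtSum dA dB M x) ∧ MorseDirSum dA dB M z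

/-- The combinatorial `M`-Morse boundary. -/
def CombBoundaryM (dA : A → A → ℝ) (dB : B → B → ℝ) (M : MorseGauge) : Type _ :=
  CombInfM dA dB M ⊕ CombFinM dA dB M

/-- The length `l(a)` of a combinatorial Morse geodesic. -/
def lenOf {dA : A → A → ℝ} {dB : B → B → ℝ} {M : MorseGauge} :
    CombBoundaryM dA dB M → ℕ∞
  | Sum.inl _ => ⊤
  | Sum.inr c => (c.l.length : ℕ∞)

/-- The `i`-th syllable `u_{i+1}(a)` of a combinatorial Morse geodesic (0-indexed). -/
def sylOf {dA : A → A → ℝ} {dB : B → B → ℝ} {M : MorseGauge} :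
    CombBoundaryM dA dB M → ℕ → Option (A ⊕ B)
  | Sum.inl c, i => some (c.u i)
  | Sum.inr c, i => c.l[i]?

/-- The Morse direction `γ(a)` of a finite-type combinatorial Morse geodesic. -/
def dirOf {dA : A → A → ℝ} {dB : B → B → ℝ} {M : MorseGauge} :
    CombBoundaryM dA dB M →
      Option (MorseBoundaryN dA (1 : A) ⊕ MorseBoundaryN dB (1 : B))
  | Sum.inl _ => none
  | Sum.inr c => some c.z

/-- Membership in the neighbourhood `U_{M,k}` for directions of the factors. -/
def USumMem (dA : A → A → ℝ) (dB : B → B → ℝ) (M : MorseGauge) (k : ℕ) :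
    MorseBoundaryN dA (1 : A) ⊕ MorseBoundaryN dB (1 : B) →
      MorseBoundaryN dA (1 : A) ⊕ MorseBoundaryN dB (1 : B) → Prop
  | Sum.inl z, Sum.inl w => w ∈ UN dA 1 M k z
  | Sum.inr z, Sum.inr w => w ∈ UN dB 1 M k z
  | _, _ => False

/-- Membership of a syllable in the filled neighbourhood `Û_{M,k}` of a direction of one
of the factors. -/
def InFilledSum (dA : A → A → ℝ) (dB : B → B → ℝ) (M : MorseGauge) (k : ℕ) :
    MorseBoundaryN dA (1 : A) ⊕ MorseBoundaryN dB (1 : B) → A ⊕ B → Prop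
  | Sum.inl z, Sum.inl x => InFilledPtN dA 1 M k z x
  | Sum.inr z, Sum.inr x => InFilledPtN dB 1 M k z x
  | _, _ => False

/-- The fundamental neighbourhood `V^M_k(a)` in the combinatorial `M`-Morse boundary. -/
def VM {dA : A → A → ℝ} {dB : B → B → ℝ} {M : MorseGauge} (k : ℕ)
    (a : CombBoundaryM dA dB M) : Set (CombBoundaryM dA dB M) :=
  match a with
  | Sum.inl c =>
      {b | (k : ℕ∞) ≤ lenOf b ∧ ∀ i < k, sylOf b i = some (c.u i)}
  | Sum.inr c =>
      {b | (c.l.length : ℕ∞) ≤ lenOf b ∧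
        (∀ i < c.l.length, sylOf b i = c.l[i]?) ∧
        ((c.l.length : ℕ∞) < lenOf b →
          ∃ x, sylOf b c.l.length = some x ∧ InFilledSum dA dB M k c.z x) ∧
        (lenOf b = (c.l.length : ℕ∞) →
          ∃ zb, dirOf b = some zb ∧ USumMem dA dB M k c.z zb)}

/-!
The filter axioms reduce to two properties of the neighbourhoods `U_{M,k}` and `Û_{M,k}` in
the factors: an `M`-Morse direction lies in all of its neighbourhoods, and they are uniformly
nested, `w ∈ U_{M,j}(z)` implying `U_{M,j}(w) ⊆ U_{M,i}(z)` and `Û_{M,j}(w) ⊆ Û_{M,i}(z)` for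
`j = i + ⌈δ_M⌉`. Both follow from one fellow-travelling estimate: a geodesic that is `K`-close at
time `m` to an `M`-Morse ray with the same origin stays `2 M(3,0)`-close to it up to time `m - K`,
because walking along the geodesic to the point nearest to the ray's point at time `m`, and then
straight to it, is a `(3, 0)`-quasi-geodesic. In a Cayley graph `M(3,0) ≥ 1`, and
`δ_M ≥ 8 M(3,0)`, so two such estimates compose strictly within `δ_M`.

On the combinatorial side, a point `b ∈ V^M_j(a)` of a finite-type `a` either continues `a` by a
syllable in `Û_{M,j}(γ(a))`, and then a small neighbourhood of `b` keeps that syllable, or has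
the syllables of `a` and a direction in `U_{M,j}(γ(a))`, and then nesting applies.
-/

section DiscreteGeodesics

variable {X : Type*}

def concatPath (γ p : ℕ → X) (s u : ℕ) : X :=
  if u ≤ s then γ u else p (u - s)

theorem concatPath_of_le {γ p : ℕ → X} {s u : ℕ} (h : u ≤ s) : concatPath γ p s u = γ u :=
  if_pos h

theorem concatPath_of_ge {γ p : ℕ → X} {s u : ℕ} (hp0 : p 0 = γ s) (h : s ≤ u) :
    concatPath γ p s u = p (u - s) := by
  rcases h.eq_or_lt with rfl | h
  · simp [concatPath, hp0]
  · exact if_neg (by omega)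

theorem IsGeodesicOnN.mono {d : X → X → ℝ} {γ : ℕ → X} {s t : Set ℕ}
    (hγ : IsGeodesicOnN d γ t) (hst : s ⊆ t) : IsGeodesicOnN d γ s :=
  fun i hi j hj => hγ i (hst hi) j (hst hj)

variable [PseudoMetricSpace X]

def IsDiscreteGeodesicSpace (X : Type*) [PseudoMetricSpace X] : Prop :=
  ∀ x y : X, ∃ (n : ℕ) (p : ℕ → X), p 0 = x ∧ p n = y ∧ IsGeodesicOnN dist p (Iic n)

theorem IsGeodesicOnN.dist_eq {γ : ℕ → X} {s : Set ℕ} (hγ : IsGeodesicOnN dist γ s)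
    {i j : ℕ} (hi : i ∈ s) (hj : j ∈ s) (hij : i ≤ j) : dist (γ i) (γ j) = (j : ℝ) - i := by
  rw [hγ i hi j hj, abs_sub_comm, abs_of_nonneg (sub_nonneg.mpr (Nat.cast_le.mpr hij))]

theorem IsGeodesicOnN.dist_zero {γ : ℕ → X} {s : Set ℕ} (hγ : IsGeodesicOnN dist γ s)
    (h0 : 0 ∈ s) {j : ℕ} (hj : j ∈ s) : dist (γ 0) (γ j) = j := by
  simpa using hγ.dist_eq h0 hj (Nat.zero_le j)

theorem isGeodesicOnN_of_forall_le {γ : ℕ → X} {s : Set ℕ}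
    (h : ∀ i ∈ s, ∀ j ∈ s, i ≤ j → dist (γ i) (γ j) = (j : ℝ) - i) : IsGeodesicOnN dist γ s := by
  intro i hi j hj
  rcases le_total i j with hij | hji
  · rw [h i hi j hj hij, abs_sub_comm, abs_of_nonneg (sub_nonneg.mpr (Nat.cast_le.mpr hij))]
  · rw [dist_comm, h j hj i hi hji, abs_of_nonneg (sub_nonneg.mpr (Nat.cast_le.mpr hji))]

theorem isQGOnN_of_forall_le {η : ℕ → X} {s : Set ℕ} {L e : ℝ}
    (h : ∀ i ∈ s, ∀ j ∈ s, i ≤ j → (1 / L) * ((j : ℝ) - i) - e ≤ dist (η i) (η j) ∧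
      dist (η i) (η j) ≤ L * ((j : ℝ) - i) + e) :
    IsQGOnN dist L e η s := by
  intro i hi j hj
  rcases le_total i j with hij | hji
  · rw [abs_sub_comm, abs_of_nonneg (sub_nonneg.mpr (Nat.cast_le.mpr hij))]
    exact h i hi j hj hij
  · rw [dist_comm, abs_of_nonneg (sub_nonneg.mpr (Nat.cast_le.mpr hji))]
    exact h j hj i hi hji

theorem dist_le_sub_of_dist_succ_le_one {p : ℕ → X} {i j : ℕ} (hij : i ≤ j)
    (h : ∀ k, i ≤ k → k < j → dist (p k) (p (k + 1)) ≤ 1) : dist (p i) (p j) ≤ (j : ℝ) - i := by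
  simpa [Nat.cast_sub hij] using
    dist_le_Ico_sum_of_dist_le hij (d := fun _ => 1) (fun {k} hik hkj => h k hik hkj)

theorem isGeodesicOnN_Iic_of_dist_succ_le_one {p : ℕ → X} {n : ℕ}
    (hstep : ∀ k < n, dist (p k) (p (k + 1)) ≤ 1) (hend : (n : ℝ) ≤ dist (p 0) (p n)) :
    IsGeodesicOnN dist p (Iic n) := by
  have hle : ∀ i j, i ≤ j → j ≤ n → dist (p i) (p j) ≤ (j : ℝ) - i := fun i j hij hjn =>
    dist_le_sub_of_dist_succ_le_one hij fun k _ hk => hstep k (by omega)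
  refine isGeodesicOnN_of_forall_le fun i hi j hj hij => le_antisymm (hle i j hij hj) ?_
  have h0i := hle 0 i (Nat.zero_le i) (hij.trans hj)
  have hjn := hle j n hj le_rfl
  have := dist_triangle4 (p 0) (p i) (p j) (p n)
  push_cast at h0i
  linarith

theorem dist_concatPath_succ_le_one {γ p : ℕ → X} {s D : ℕ}
    (hγ : IsGeodesicOnN dist γ (Iic s)) (hp : IsGeodesicOnN dist p (Iic D)) (hp0 : p 0 = γ s)
    {k : ℕ} (hk : k < s + D) : dist (concatPath γ p s k) (concatPath γ p s (k + 1)) ≤ 1 := by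
  rcases lt_or_ge k s with hks | hks
  · rw [concatPath_of_le hks.le, concatPath_of_le hks,
      hγ.dist_eq (mem_Iic.mpr hks.le) (mem_Iic.mpr hks) (Nat.le_succ k)]
    push_cast
    linarith
  · rw [concatPath_of_ge hp0 hks, concatPath_of_ge hp0 (by omega), Nat.sub_add_comm hks,
      hp.dist_eq (mem_Iic.mpr (by omega)) (mem_Iic.mpr (by omega)) (Nat.le_succ _)]
    push_cast
    linarith

theorem isQGOnN_concatPath {γ p : ℕ → X} {s D : ℕ}
    (hγ : IsGeodesicOnN dist γ (Iic s)) (hp : IsGeodesicOnN dist p (Iic D)) (hp0 : p 0 = γ s)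
    (hnear : ∀ i ≤ s, dist (γ s) (p D) ≤ dist (γ i) (p D)) :
    IsQGOnN dist 3 0 (concatPath γ p s) (Icc 0 (s + D)) := by
  refine isQGOnN_of_forall_le fun i _ j hj hij => ?_
  rw [mem_Icc] at hj
  have hji : (0 : ℝ) ≤ (j : ℝ) - i := sub_nonneg.mpr (Nat.cast_le.mpr hij)
  have hupper := dist_le_sub_of_dist_succ_le_one (p := concatPath γ p s) hij fun k _ hk =>
    dist_concatPath_succ_le_one hγ hp hp0 (hk.trans_le hj.2)
  refine ⟨?_, by linarith⟩
  rcases le_total j s with hjs | hsj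
  · rw [concatPath_of_le (hij.trans hjs), concatPath_of_le hjs,
      hγ.dist_eq (mem_Iic.mpr (hij.trans hjs)) (mem_Iic.mpr hjs) hij]
    linarith
  rcases le_total s i with hsi | his
  · rw [concatPath_of_ge hp0 hsi, concatPath_of_ge hp0 hsj,
      hp.dist_eq (mem_Iic.mpr (by omega)) (mem_Iic.mpr (by omega)) (by omega),
      Nat.cast_sub hsi, Nat.cast_sub hsj]
    linarith
  -- For `i < s < j` the nearest-point property bounds the distance below by `j - s`, the
  -- triangle inequality at `γ s` by `(s - i) - (j - s)`; one of the two is `≥ (j - i) / 3`.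
  rw [concatPath_of_le his, concatPath_of_ge hp0 hsj]
  have hjD : j - s ≤ D := by omega
  have hγis := hγ.dist_eq (mem_Iic.mpr his) (mem_Iic.mpr le_rfl) his
  have hpv := hp.dist_zero (mem_Iic.mpr (Nat.zero_le D)) (mem_Iic.mpr hjD)
  have hpvD := hp.dist_eq (mem_Iic.mpr hjD) (mem_Iic.mpr le_rfl) hjD
  have hpD := hp.dist_zero (mem_Iic.mpr (Nat.zero_le D)) (mem_Iic.mpr le_rfl)
  have hnear_i := hnear i his
  rw [← hp0] at hnear_i hγis
  rw [Nat.cast_sub hsj] at hpv hpvD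
  have h1 := dist_triangle (γ i) (p (j - s)) (p D)
  have h2 := dist_triangle (γ i) (p (j - s)) (p 0)
  rw [dist_comm (p (j - s))] at h2
  linarith

end DiscreteGeodesics

section MorseFellowTravel

variable {X : Type*} [PseudoMetricSpace X] {M : MorseGauge}

theorem IsGeodesicOnN.dist_le_two_mul_of_dist_le {γ ξ : ℕ → X} {s : Set ℕ}
    (hγ : IsGeodesicOnN dist γ s) (hξ : IsGeodesicOnN dist ξ univ) (h0 : γ 0 = ξ 0) (hs : 0 ∈ s)
    {t j : ℕ} (ht : t ∈ s) {C : ℝ} (h : dist (γ t) (ξ j) ≤ C) : dist (γ t) (ξ t) ≤ 2 * C := by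
  have hjt : |(j : ℝ) - t| ≤ C := by
    rw [← hξ.dist_zero (mem_univ 0) (mem_univ j), ← hγ.dist_zero hs ht, h0,
      dist_comm (ξ 0), dist_comm (ξ 0)]
    exact (abs_dist_sub_le (ξ j) (γ t) (ξ 0)).trans (by rwa [dist_comm])
  calc dist (γ t) (ξ t) ≤ dist (γ t) (ξ j) + dist (ξ j) (ξ t) := dist_triangle _ _ _
    _ ≤ 2 * C := by rw [hξ j trivial t trivial]; linarith

theorem IsMorseOnN.dist_le_of_dist_le (hX : IsDiscreteGeodesicSpace X) {ξ γ : ℕ → X}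
    (hξ : IsGeodesicOnN dist ξ univ) (hξM : IsMorseOnN dist M ξ univ) {m : ℕ}
    (hγ : IsGeodesicOnN dist γ (Iic m)) (h0 : γ 0 = ξ 0) {K : ℝ}
    (hK : dist (γ m) (ξ m) ≤ K) {t : ℕ} (ht : t + K ≤ m) : dist (γ t) (ξ t) ≤ 2 * M 3 0 := by
  obtain ⟨s, hsm, hnear⟩ := (Finset.range (m + 1)).exists_min_image
    (fun q => dist (γ q) (ξ m)) ⟨m, Finset.self_mem_range_succ m⟩
  rw [Finset.mem_range, Nat.lt_succ_iff] at hsm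
  obtain ⟨D, p, hp0, hpD, hp⟩ := hX (γ s) (ξ m)
  have hts : t ≤ s := by
    have hDK : dist (γ s) (ξ m) ≤ K := (hnear m (Finset.self_mem_range_succ m)).trans hK
    have hm := dist_triangle (ξ 0) (γ s) (ξ m)
    rw [hξ.dist_zero (mem_univ 0) (mem_univ m), ← h0,
      hγ.dist_zero (mem_Iic.mpr (Nat.zero_le m)) (mem_Iic.mpr hsm)] at hm
    exact_mod_cast (show (t : ℝ) ≤ s by linarith)
  have hζ := isQGOnN_concatPath (hγ.mono (Iic_subset_Iic.mpr hsm)) hp hp0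
    fun i hi => by rw [hpD]; exact hnear i (Finset.mem_range_succ_iff.mpr (hi.trans hsm))
  obtain ⟨j, -, hj⟩ := hξM 3 0 (by norm_num) le_rfl _ 0 (s + D) (Nat.zero_le _) hζ
    ⟨0, trivial, by rw [concatPath_of_le (Nat.zero_le s), h0]⟩
    ⟨m, trivial, by rw [concatPath_of_ge hp0 (Nat.le_add_right s D), Nat.add_sub_cancel_left, hpD]⟩
    t ⟨Nat.zero_le t, by omega⟩
  rw [concatPath_of_le hts] at hj
  exact hγ.dist_le_two_mul_of_dist_le hξ h0 (mem_Iic.mpr (Nat.zero_le m))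
    (mem_Iic.mpr (hts.trans hsm)) hj

theorem eight_mul_le_deltaM (M : MorseGauge) : 8 * M 3 0 ≤ deltaM M :=
  le_max_right _ _

theorem add_deltaM_le_add_ceil {i t : ℕ} (ht : t ≤ i) :
    t + deltaM M ≤ ((i + ⌈deltaM M⌉₊ : ℕ) : ℝ) := by
  push_cast
  linarith [Nat.le_ceil (deltaM M), (Nat.cast_le (α := ℝ)).mpr ht]

variable {o : X}

theorem MorseBoundaryN.exists_dist_le_of_mk_eq {γ ξ : MRayN dist o}
    (h : (Quot.mk _ γ : MorseBoundaryN dist o) = Quot.mk _ ξ) :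
    ∃ C, ∀ i, dist (γ.1 i) (ξ.1 i) ≤ C := by
  have hrel := Quot.eqvGen_exact h
  clear h
  induction hrel with
  | rel _ _ hab => exact hab
  | refl => exact ⟨0, fun i => (dist_self _).le⟩
  | symm _ _ _ ih =>
    obtain ⟨C, hC⟩ := ih
    exact ⟨C, fun i => dist_comm (α := X) .. ▸ hC i⟩
  | trans _ _ _ _ _ ih₁ ih₂ =>
    obtain ⟨C₁, h₁⟩ := ih₁
    obtain ⟨C₂, h₂⟩ := ih₂
    exact ⟨C₁ + C₂, fun i => (dist_triangle _ _ _).trans (add_le_add (h₁ i) (h₂ i))⟩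

theorem MRayN.dist_le_of_mk_eq (hX : IsDiscreteGeodesicSpace X) {γ ξ : MRayN dist o}
    (hξM : IsMorseOnN dist M ξ.1 univ)
    (h : (Quot.mk _ γ : MorseBoundaryN dist o) = Quot.mk _ ξ) (t : ℕ) :
    dist (γ.1 t) (ξ.1 t) ≤ 2 * M 3 0 := by
  obtain ⟨C, hC⟩ := MorseBoundaryN.exists_dist_le_of_mk_eq h
  exact hξM.dist_le_of_dist_le hX ξ.2.2.1 (γ.2.2.1.mono (subset_univ _)) (γ.2.1.trans ξ.2.1.symm)
    (hC (t + ⌈C⌉₊)) (by push_cast; linarith [Nat.le_ceil C])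

theorem mem_UN_self (hX : IsDiscreteGeodesicSpace X) (hM : 0 < M 3 0) {z : MorseBoundaryN dist o}
    (hz : MorseDirN dist o M z) (k : ℕ) : z ∈ UN dist o M k z := by
  obtain ⟨γ, hγM, rfl⟩ := hz
  refine ⟨γ, rfl, hγM, fun ξ hξM hξ t _ => ?_⟩
  have := MRayN.dist_le_of_mk_eq hX hξM hξ.symm t
  linarith [eight_mul_le_deltaM M]

end MorseFellowTravel

section Nesting

variable {X : Type*} {M : MorseGauge} {o : X}

theorem UN_antitone (d : X → X → ℝ) (o : X) (M : MorseGauge) (z : MorseBoundaryN d o) :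
    Antitone fun k => UN d o M k z := by
  rintro k k' hk w ⟨η, hη, hηM, hclose⟩
  exact ⟨η, hη, hηM, fun ξ hξM hξ t ht => hclose ξ hξM hξ t (ht.trans hk)⟩

theorem InFilledPtN.of_le {d : X → X → ℝ} {z : MorseBoundaryN d o} {x : X} {k k' : ℕ}
    (hk : k ≤ k') (h : InFilledPtN d o M k' z x) : InFilledPtN d o M k z x := by
  obtain ⟨n, γ, hn, hγ0, hγn, hγ, hγM, hclose⟩ := h
  exact ⟨n, γ, hk.trans hn, hγ0, hγn, hγ, hγM, fun ξ hξM hξ t ht => hclose ξ hξM hξ t (ht.trans hk)⟩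

variable [PseudoMetricSpace X]

theorem dist_lt_deltaM_of_fellow (hX : IsDiscreteGeodesicSpace X) (hM : 0 < M 3 0)
    {γ η ξ : ℕ → X} {J : ℕ} (hγ : IsGeodesicOnN dist γ (Iic J))
    (hη : IsGeodesicOnN dist η univ) (hηM : IsMorseOnN dist M η univ)
    (hξ : IsGeodesicOnN dist ξ univ) (hξM : IsMorseOnN dist M ξ univ)
    (hγη : γ 0 = η 0) (hηξ : η 0 = ξ 0)
    (hJγ : dist (γ J) (η J) < deltaM M) (hJη : dist (η J) (ξ J) < deltaM M)
    {t : ℕ} (ht : t + deltaM M ≤ J) : dist (γ t) (ξ t) < deltaM M := by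
  have h₁ := hηM.dist_le_of_dist_le hX hη hγ hγη hJγ.le ht
  have h₂ := hξM.dist_le_of_dist_le hX hξ (hη.mono (subset_univ _)) hηξ hJη.le ht
  linarith [dist_triangle (γ t) (η t) (ξ t), eight_mul_le_deltaM M]

theorem UN_subset_of_mem_UN (hX : IsDiscreteGeodesicSpace X) (hM : 0 < M 3 0) {i : ℕ}
    {z w : MorseBoundaryN dist o} (hw : w ∈ UN dist o M (i + ⌈deltaM M⌉₊) z) :
    UN dist o M (i + ⌈deltaM M⌉₊) w ⊆ UN dist o M i z := by
  obtain ⟨η, rfl, hηM, hηz⟩ := hw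
  rintro v ⟨γ, rfl, hγM, hγη⟩
  refine ⟨γ, rfl, hγM, fun ξ hξM hξ t ht => ?_⟩
  exact dist_lt_deltaM_of_fellow hX hM (γ.2.2.1.mono (subset_univ _)) η.2.2.1 hηM ξ.2.2.1 hξM
    (γ.2.1.trans η.2.1.symm) (η.2.1.trans ξ.2.1.symm) (hγη η hηM rfl _ le_rfl)
    (hηz ξ hξM hξ _ le_rfl) (add_deltaM_le_add_ceil ht)

theorem InFilledPtN.of_mem_UN (hX : IsDiscreteGeodesicSpace X) (hM : 0 < M 3 0) {i : ℕ}
    {z w : MorseBoundaryN dist o} (hw : w ∈ UN dist o M (i + ⌈deltaM M⌉₊) z) {x : X}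
    (hx : InFilledPtN dist o M (i + ⌈deltaM M⌉₊) w x) : InFilledPtN dist o M i z x := by
  obtain ⟨η, rfl, hηM, hηz⟩ := hw
  obtain ⟨n, γ, hn, hγ0, hγn, hγ, hγM, hγη⟩ := hx
  refine ⟨n, γ, (Nat.le_add_right i _).trans hn, hγ0, hγn, hγ, hγM, fun ξ hξM hξ t ht => ?_⟩
  exact dist_lt_deltaM_of_fellow hX hM (hγ.mono (Iic_subset_Iic.mpr hn)) η.2.2.1 hηM ξ.2.2.1 hξM
    (hγ0.trans η.2.1.symm) (η.2.1.trans ξ.2.1.symm) (hγη η hηM rfl _ le_rfl)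
    (hηz ξ hξM hξ _ le_rfl) (add_deltaM_le_add_ceil ht)

end Nesting

section GaugeLowerBound

variable {X : Type*} [PseudoMetricSpace X] {M : MorseGauge}

/-- The detour `ξ 0 → x → ξ 2` is a `(3, 0)`-quasi-geodesic whose middle point is at distance
at least `1` from the ray. -/
theorem one_le_gauge_of_dist_eq_one (hsep : ∀ y z : X, y ≠ z → 1 ≤ dist y z)
    {ξ : ℕ → X} (hξ : IsGeodesicOnN dist ξ univ) (hξM : IsMorseOnN dist M ξ univ) {x : X}
    (hx : dist (ξ 0) x = 1) (hx1 : x ≠ ξ 1) : 1 ≤ M 3 0 := by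
  have hoff : ∀ j, x ≠ ξ j := by
    rintro j rfl
    have hj : (j : ℝ) = 1 := by rw [← hx, hξ.dist_zero (mem_univ 0) (mem_univ j)]
    exact hx1 (by rw [Nat.cast_eq_one.mp hj])
  have h02 : dist (ξ 0) (ξ 2) = 2 := by simpa using hξ.dist_zero (mem_univ 0) (mem_univ 2)
  have hx2 := hsep x (ξ 2) (hoff 2)
  have hx2' := dist_triangle x (ξ 0) (ξ 2)
  rw [dist_comm x (ξ 0), hx] at hx2'
  set η : ℕ → X := fun u => if u = 1 then x else ξ u
  have hQG : IsQGOnN dist 3 0 η (Icc 0 2) := by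
    refine isQGOnN_of_forall_le fun i hi j hj hij => ?_
    obtain ⟨-, hi⟩ := hi
    obtain ⟨-, hj⟩ := hj
    interval_cases i <;> interval_cases j <;> norm_num [η, dist_comm (ξ 2) x, hx, h02]
    exact ⟨by linarith, by linarith⟩
  obtain ⟨j, -, hj⟩ := hξM 3 0 (by norm_num) le_rfl η 0 2 (by norm_num) hQG
    ⟨0, trivial, rfl⟩ ⟨2, trivial, rfl⟩ 1 ⟨zero_le_one, one_le_two⟩
  exact (hsep x (ξ j) (hoff j)).trans hj

end GaugeLowerBound

section WordMetric

variable {G : Type*} [Group G] {S : Set G} {M : MorseGauge}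

noncomputable def wordLength (S : Set G) (g : G) : ℕ :=
  sInf {n | ∃ l : List G, IsWordOver S l ∧ l.prod = g ∧ l.length = n}

theorem IsWordOver.append {l l' : List G} (hl : IsWordOver S l) (hl' : IsWordOver S l') :
    IsWordOver S (l ++ l') := by
  intro x hx
  rcases List.mem_append.mp hx with hx | hx
  exacts [hl x hx, hl' x hx]

theorem IsWordOver.sublist {l l' : List G} (hl : IsWordOver S l) (h : l'.Sublist l) :
    IsWordOver S l' :=
  fun x hx => hl x (h.subset hx)

theorem IsWordOver.inv_reverse {l : List G} (hl : IsWordOver S l) :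
    IsWordOver S (l.map (·⁻¹)).reverse := by
  intro x hx
  obtain ⟨y, hy, rfl⟩ := List.mem_map.mp (List.mem_reverse.mp hx)
  rw [inv_inv]
  exact (hl y hy).symm

theorem exists_isWordOver_prod_eq (hS : Subgroup.closure S = ⊤) (g : G) :
    ∃ l : List G, IsWordOver S l ∧ l.prod = g := by
  have hg : g ∈ (Subgroup.closure S).toSubmonoid := by rw [hS]; trivial
  rw [Subgroup.closure_toSubmonoid] at hg
  obtain ⟨l, hl, rfl⟩ := Submonoid.exists_list_of_mem_closure hg
  exact ⟨l, fun x hx => hl x hx, rfl⟩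

theorem wordLength_le {l : List G} (hl : IsWordOver S l) : wordLength S l.prod ≤ l.length :=
  Nat.sInf_le ⟨l, hl, rfl, rfl⟩

theorem exists_isWordOver_length_eq_wordLength (hS : Subgroup.closure S = ⊤) (g : G) :
    ∃ l : List G, IsWordOver S l ∧ l.prod = g ∧ l.length = wordLength S g := by
  obtain ⟨l, hl, hg⟩ := exists_isWordOver_prod_eq hS g
  exact Nat.sInf_mem (s := {n | ∃ l : List G, IsWordOver S l ∧ l.prod = g ∧ l.length = n})
    ⟨l.length, l, hl, hg, rfl⟩

theorem wordDist_eq_wordLength (hS : Subgroup.closure S = ⊤) (x y : G) :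
    wordDist S x y = wordLength S (x⁻¹ * y) := by
  obtain ⟨l, hl, hprod, hlen⟩ := exists_isWordOver_length_eq_wordLength hS (x⁻¹ * y)
  refine le_antisymm (csInf_le ⟨0, ?_⟩ ⟨l, hl, hprod, by rw [hlen]⟩)
    (le_csInf ⟨_, l, hl, hprod, rfl⟩ ?_)
  · rintro r ⟨l', -, -, rfl⟩
    positivity
  · rintro r ⟨l', hl', hprod', rfl⟩
    exact_mod_cast hprod' ▸ wordLength_le hl'

theorem wordLength_one : wordLength S 1 = 0 :=
  Nat.le_zero.mp (wordLength_le (l := []) (by simp [IsWordOver]))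

theorem wordLength_mul_le (hS : Subgroup.closure S = ⊤) (g h : G) :
    wordLength S (g * h) ≤ wordLength S g + wordLength S h := by
  obtain ⟨l, hl, rfl, hlen⟩ := exists_isWordOver_length_eq_wordLength hS g
  obtain ⟨l', hl', rfl, hlen'⟩ := exists_isWordOver_length_eq_wordLength hS h
  simpa [← hlen, ← hlen'] using wordLength_le (hl.append hl')

theorem wordLength_inv_le (hS : Subgroup.closure S = ⊤) (g : G) :
    wordLength S g⁻¹ ≤ wordLength S g := by
  obtain ⟨l, hl, rfl, hlen⟩ := exists_isWordOver_length_eq_wordLength hS g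
  simpa [← List.prod_inv_reverse, ← hlen] using wordLength_le hl.inv_reverse

theorem wordLength_inv (hS : Subgroup.closure S = ⊤) (g : G) :
    wordLength S g⁻¹ = wordLength S g :=
  le_antisymm (wordLength_inv_le hS g) (by simpa using wordLength_inv_le hS g⁻¹)

theorem eq_one_of_wordLength_eq_zero (hS : Subgroup.closure S = ⊤) {g : G}
    (h : wordLength S g = 0) : g = 1 := by
  obtain ⟨l, -, rfl, hlen⟩ := exists_isWordOver_length_eq_wordLength hS g
  rw [h, List.length_eq_zero_iff] at hlen
  simp [hlen]

noncomputable abbrev wordPseudoMetricSpace (hS : Subgroup.closure S = ⊤) :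
    PseudoMetricSpace G where
  dist := wordDist S
  dist_self x := by simp [wordDist_eq_wordLength hS, wordLength_one]
  dist_comm x y := by
    rw [wordDist_eq_wordLength hS, wordDist_eq_wordLength hS, ← wordLength_inv hS]
    simp
  dist_triangle x y z := by
    simp only [wordDist_eq_wordLength hS]
    have h := wordLength_mul_le hS (x⁻¹ * y) (y⁻¹ * z)
    rw [mul_assoc, mul_inv_cancel_left] at h
    exact_mod_cast h


theorem isDiscreteGeodesicSpace_wordDist (hS : Subgroup.closure S = ⊤) :
    @IsDiscreteGeodesicSpace G (wordPseudoMetricSpace hS) := by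
  let _ := wordPseudoMetricSpace hS
  intro x y
  obtain ⟨l, hl, hprod, hlen⟩ := exists_isWordOver_length_eq_wordLength hS (x⁻¹ * y)
  refine ⟨l.length, fun k => x * (l.take k).prod, by simp, by simp [hprod], ?_⟩
  refine isGeodesicOnN_Iic_of_dist_succ_le_one (fun k hk => ?_) ?_
  · change wordDist S _ _ ≤ 1
    rw [wordDist_eq_wordLength hS, List.prod_take_succ l k hk, mul_inv_rev, mul_assoc,
      inv_mul_cancel_left, inv_mul_cancel_left]
    have := wordLength_le (l := [l[k]])
      (hl.sublist (List.singleton_sublist.mpr (l.getElem_mem hk)))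
    rw [List.prod_singleton, List.length_singleton] at this
    exact_mod_cast this
  · change (l.length : ℝ) ≤ wordDist S (x * (l.take 0).prod) (x * (l.take l.length).prod)
    rw [List.take_zero, List.take_length, List.prod_nil, mul_one, hprod, mul_inv_cancel_left,
      wordDist_eq_wordLength hS, hlen]

theorem one_le_wordDist_of_ne (hS : Subgroup.closure S = ⊤) {x y : G} (h : x ≠ y) :
    1 ≤ wordDist S x y := by
  rw [wordDist_eq_wordLength hS]
  refine Nat.one_le_cast.mpr (Nat.one_le_iff_ne_zero.mpr fun h0 => h ?_)
  rw [← mul_inv_cancel_left x y, eq_one_of_wordLength_eq_zero hS h0, mul_one]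

/-- The first step `ξ 1` of a geodesic ray from `1` is a generator; either its inverse is another
one, or `ξ 1` is an involution and the second step `(ξ 1)⁻¹ * ξ 2` differs from it. -/
theorem exists_wordDist_one_eq_one_ne (hS : Subgroup.closure S = ⊤) {ξ : ℕ → G}
    (hξ0 : ξ 0 = 1) (hξ : IsGeodesicOnN (wordDist S) ξ univ) :
    ∃ x, wordDist S 1 x = 1 ∧ x ≠ ξ 1 := by
  have hstep : ∀ j, wordDist S 1 ((ξ j)⁻¹ * ξ (j + 1)) = 1 := by
    intro j
    rw [wordDist_eq_wordLength hS, inv_one, one_mul, ← wordDist_eq_wordLength hS,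
      hξ j trivial (j + 1) trivial]
    simp
  by_cases hinv : (ξ 1)⁻¹ = ξ 1
  · refine ⟨(ξ 1)⁻¹ * ξ 2, hstep 1, fun h => ?_⟩
    have h2 : ξ 2 = ξ 0 := calc
      ξ 2 = ξ 1 * ((ξ 1)⁻¹ * ξ 2) := (mul_inv_cancel_left _ _).symm
      _ = ξ 0 := by rw [h, hξ0]; nth_rw 1 [← hinv]; exact inv_mul_cancel _
    have := hξ 0 trivial 2 trivial
    rw [h2, wordDist_eq_wordLength hS, inv_mul_cancel, wordLength_one] at this
    norm_num at this
  · refine ⟨(ξ 1)⁻¹, ?_, hinv⟩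
    have h1 := hstep 0
    simp only [hξ0, inv_one, one_mul, wordDist_eq_wordLength hS] at h1 ⊢
    rwa [wordLength_inv hS]

theorem one_le_gauge_of_isMorseOnN_wordDist (hS : Subgroup.closure S = ⊤)
    {γ : MRayN (wordDist S) (1 : G)} (hγM : IsMorseOnN (wordDist S) M γ.1 univ) : 1 ≤ M 3 0 := by
  let _ := wordPseudoMetricSpace hS
  obtain ⟨x, hx, hx1⟩ := exists_wordDist_one_eq_one_ne hS γ.2.1 γ.2.2.1
  exact one_le_gauge_of_dist_eq_one (fun _ _ => one_le_wordDist_of_ne hS) γ.2.2.1 hγM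
    (by rw [γ.2.1]; exact hx) hx1

theorem mem_UN_wordDist_self (hS : Subgroup.closure S = ⊤) {z : MorseBoundaryN (wordDist S) 1}
    (hz : MorseDirN (wordDist S) 1 M z) (k : ℕ) : z ∈ UN (wordDist S) 1 M k z := by
  let _ := wordPseudoMetricSpace hS
  obtain ⟨γ, hγM, rfl⟩ := hz
  exact mem_UN_self (isDiscreteGeodesicSpace_wordDist hS)
    (zero_lt_one.trans_le (one_le_gauge_of_isMorseOnN_wordDist hS hγM)) ⟨γ, hγM, rfl⟩ k

theorem UN_wordDist_nesting (hS : Subgroup.closure S = ⊤) {i : ℕ}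
    {z w : MorseBoundaryN (wordDist S) 1} (hw : w ∈ UN (wordDist S) 1 M (i + ⌈deltaM M⌉₊) z) :
    UN (wordDist S) 1 M (i + ⌈deltaM M⌉₊) w ⊆ UN (wordDist S) 1 M i z ∧
      ∀ x, InFilledPtN (wordDist S) 1 M (i + ⌈deltaM M⌉₊) w x →
        InFilledPtN (wordDist S) 1 M i z x := by
  let _ := wordPseudoMetricSpace hS
  have hM : 0 < M 3 0 := by
    obtain ⟨η, -, hηM, -⟩ := hw
    exact zero_lt_one.trans_le (one_le_gauge_of_isMorseOnN_wordDist hS hηM)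
  exact ⟨UN_subset_of_mem_UN (isDiscreteGeodesicSpace_wordDist hS) hM hw,
    fun x => InFilledPtN.of_mem_UN (isDiscreteGeodesicSpace_wordDist hS) hM hw⟩

end WordMetric

section CombinatorialNeighbourhoods

variable {A B : Type*} [Group A] [Group B] {M : MorseGauge}

theorem USumMem.of_le {dA : A → A → ℝ} {dB : B → B → ℝ} {k k' : ℕ} (hk : k ≤ k')
    {z w : MorseBoundaryN dA (1 : A) ⊕ MorseBoundaryN dB (1 : B)}
    (h : USumMem dA dB M k' z w) : USumMem dA dB M k z w := by
  rcases z with z | z <;> rcases w with w | w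
  exacts [UN_antitone _ _ _ _ hk h, h.elim, h.elim, UN_antitone _ _ _ _ hk h]

theorem InFilledSum.of_le {dA : A → A → ℝ} {dB : B → B → ℝ} {k k' : ℕ} (hk : k ≤ k')
    {z : MorseBoundaryN dA (1 : A) ⊕ MorseBoundaryN dB (1 : B)} {x : A ⊕ B}
    (h : InFilledSum dA dB M k' z x) : InFilledSum dA dB M k z x := by
  rcases z with z | z <;> rcases x with x | x
  exacts [InFilledPtN.of_le hk h, h.elim, h.elim, InFilledPtN.of_le hk h]

def HasUniformNesting (dA : A → A → ℝ) (dB : B → B → ℝ) (M : MorseGauge) : Prop :=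
  ∀ i, ∃ j, i ≤ j ∧ ∀ z w, USumMem dA dB M j z w →
    (∀ v, USumMem dA dB M j w v → USumMem dA dB M i z v) ∧
    (∀ x, InFilledSum dA dB M j w x → InFilledSum dA dB M i z x)

section WordMetricFactors

variable {SA : Set A} {SB : Set B}

theorem USumMem_wordDist_self (hA : Subgroup.closure SA = ⊤) (hB : Subgroup.closure SB = ⊤)
    (k : ℕ) (z : MorseBoundaryN (wordDist SA) (1 : A) ⊕ MorseBoundaryN (wordDist SB) (1 : B))
    (hz : MorseDirSum (wordDist SA) (wordDist SB) M z) :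
    USumMem (wordDist SA) (wordDist SB) M k z z := by
  rcases z with z | z
  exacts [mem_UN_wordDist_self hA hz k, mem_UN_wordDist_self hB hz k]

theorem hasUniformNesting_wordDist (hA : Subgroup.closure SA = ⊤)
    (hB : Subgroup.closure SB = ⊤) : HasUniformNesting (wordDist SA) (wordDist SB) M := by
  refine fun i => ⟨i + ⌈deltaM M⌉₊, Nat.le_add_right _ _, ?_⟩
  rintro (z | z) (w | w) hw
  · obtain ⟨hU, hF⟩ := UN_wordDist_nesting hA hw
    exact ⟨by rintro (v | v) hv; exacts [hU hv, hv.elim],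
      by rintro (x | x) hx; exacts [hF x hx, hx.elim]⟩
  · exact hw.elim
  · exact hw.elim
  · obtain ⟨hU, hF⟩ := UN_wordDist_nesting hB hw
    exact ⟨by rintro (v | v) hv; exacts [hv.elim, hU hv],
      by rintro (x | x) hx; exacts [hx.elim, hF x hx]⟩

end WordMetricFactors

variable {dA : A → A → ℝ} {dB : B → B → ℝ}

theorem mem_VM_self (hself : ∀ k z, MorseDirSum dA dB M z → USumMem dA dB M k z z) (k : ℕ)
    (a : CombBoundaryM dA dB M) : a ∈ VM k a := by
  rcases a with c | c
  · exact ⟨le_top, fun _ _ => rfl⟩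
  · exact ⟨le_rfl, fun _ _ => rfl, fun h => absurd h (lt_irrefl _),
      fun _ => ⟨c.z, rfl, hself k c.z c.morse.2⟩⟩

theorem le_lenOf_of_mem_VM {k : ℕ} {b e : CombBoundaryM dA dB M} (he : e ∈ VM k b)
    (hk : (k : ℕ∞) ≤ lenOf b) : (k : ℕ∞) ≤ lenOf e := by
  rcases b with cb | cb
  · exact he.1
  · exact hk.trans he.1

theorem sylOf_eq_of_mem_VM {k i : ℕ} {b e : CombBoundaryM dA dB M} (he : e ∈ VM k b)
    (hik : i < k) (hib : (i : ℕ∞) < lenOf b) : sylOf e i = sylOf b i := by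
  rcases b with cb | cb
  · exact he.2 i hik
  · exact he.2.1 i ((Nat.cast_lt (α := ℕ∞)).mp hib)

theorem VM_inr_subset_VM_inr {k i : ℕ} {c c' : CombFinM dA dB M} (hl : c'.l = c.l)
    (hU : ∀ w, USumMem dA dB M k c'.z w → USumMem dA dB M i c.z w)
    (hF : ∀ x, InFilledSum dA dB M k c'.z x → InFilledSum dA dB M i c.z x) :
    VM k (Sum.inr c') ⊆ VM i (Sum.inr c) := by
  rintro e ⟨hlen, hsyl, hlong, hsame⟩
  rw [hl] at hlen hsyl hlong hsame
  refine ⟨hlen, hsyl, fun h => ?_, fun h => ?_⟩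
  · obtain ⟨x, hx, hxF⟩ := hlong h
    exact ⟨x, hx, hF x hxF⟩
  · obtain ⟨w, hw, hwU⟩ := hsame h
    exact ⟨w, hw, hU w hwU⟩

theorem VM_antitone (a : CombBoundaryM dA dB M) : Antitone fun k => VM k a := by
  intro k k' hk
  rcases a with c | c
  · rintro _ ⟨hlen, hsyl⟩
    exact ⟨(Nat.cast_le.mpr hk).trans hlen, fun i hi => hsyl i (hi.trans_le hk)⟩
  · exact VM_inr_subset_VM_inr rfl (fun _ => USumMem.of_le hk) (fun _ => InFilledSum.of_le hk)

theorem VM_subset_of_mem_VM_inl {i : ℕ} {c : CombInfM dA dB M} {b : CombBoundaryM dA dB M}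
    (hb : b ∈ VM i (Sum.inl c)) : VM i b ⊆ VM i (Sum.inl c) := fun _ he =>
  ⟨le_lenOf_of_mem_VM he hb.1, fun i' hi' =>
    (sylOf_eq_of_mem_VM he hi' ((Nat.cast_lt.mpr hi').trans_le hb.1)).trans (hb.2 i' hi')⟩

theorem VM_succ_subset_of_lt_lenOf {i : ℕ} {c : CombFinM dA dB M} {b : CombBoundaryM dA dB M}
    (hlen : (c.l.length : ℕ∞) < lenOf b) (hsyl : ∀ i' < c.l.length, sylOf b i' = c.l[i']?)
    {x : A ⊕ B} (hx : sylOf b c.l.length = some x) (hxF : InFilledSum dA dB M i c.z x) :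
    VM (c.l.length + 1) b ⊆ VM i (Sum.inr c) := by
  intro e he
  have hlt : (c.l.length : ℕ∞) < lenOf e :=
    (Nat.cast_lt.mpr (Nat.lt_succ_self _)).trans_le
      (le_lenOf_of_mem_VM he (by exact_mod_cast Order.add_one_le_of_lt hlen))
  have hagree : ∀ i' ≤ c.l.length, sylOf e i' = sylOf b i' := fun i' hi' =>
    sylOf_eq_of_mem_VM he (Nat.lt_succ_of_le hi') ((Nat.cast_le.mpr hi').trans_lt hlen)
  exact ⟨hlt.le, fun i' hi' => (hagree i' hi'.le).trans (hsyl i' hi'),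
    fun _ => ⟨x, (hagree _ le_rfl).trans hx, hxF⟩, fun h => absurd h hlt.ne'⟩

theorem exists_VM_subset (hnest : HasUniformNesting dA dB M) (a : CombBoundaryM dA dB M)
    (i : ℕ) : ∃ j, ∀ b ∈ VM j a, ∃ k, VM k b ⊆ VM i a := by
  rcases a with c | c
  · exact ⟨i, fun b hb => ⟨i, VM_subset_of_mem_VM_inl hb⟩⟩
  obtain ⟨j, hij, hj⟩ := hnest i
  refine ⟨j, fun b ⟨hlen, hsyl, hlong, hsame⟩ => ?_⟩
  rcases hlen.lt_or_eq with hlt | heq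
  · obtain ⟨x, hx, hxF⟩ := hlong hlt
    exact ⟨_, VM_succ_subset_of_lt_lenOf hlt hsyl hx (InFilledSum.of_le hij hxF)⟩
  obtain ⟨w, hw, hwU⟩ := hsame heq.symm
  rcases b with cb | cb
  · exact absurd heq (ENat.natCast_ne_top _)
  cases hw
  have hl : cb.l = c.l := by
    have hn : c.l.length = cb.l.length := (Nat.cast_inj (R := ℕ∞)).mp heq
    refine List.ext_getElem? fun n => ?_
    rcases lt_or_ge n c.l.length with hn' | hn'
    · exact hsyl n hn'
    · rw [List.getElem?_eq_none (by omega), List.getElem?_eq_none hn']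
  exact ⟨j, VM_inr_subset_VM_inr hl (hj _ _ hwU).1 (hj _ _ hwU).2⟩

end CombinatorialNeighbourhoods

theorem stmt14_general (A B : Type) [Group A] [Group B] (SA : Set A) (SB : Set B)
    (hSAgen : Subgroup.closure SA = ⊤) (hSBgen : Subgroup.closure SB = ⊤)
    (M : MorseGauge) (a : CombBoundaryM (wordDist SA) (wordDist SB) M) :
    (∀ k, a ∈ VM k a) ∧
    (∀ i j, ∃ k, VM k a ⊆ VM i a ∩ VM j a) ∧
    (∀ i, ∃ j, ∀ b ∈ VM j a, ∃ k, VM k b ⊆ VM i a) :=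
  ⟨fun k => mem_VM_self (USumMem_wordDist_self hSAgen hSBgen) k a,
    fun i j => ⟨max i j, subset_inter (VM_antitone a (le_max_left i j))
      (VM_antitone a (le_max_right i j))⟩,
    exists_VM_subset (hasUniformNesting_wordDist hSAgen hSBgen) a⟩

/-- the family `{V^M_k(a)}_k` is a fundamental system of neighbourhoods on
the combinatorial `M`-Morse boundary: (1) `a ∈ V^M_k(a)`; (2) the family is directed;
(3) it satisfies the neighbourhood filter axiom. -/
theorem stmt14 (A B : Type) [Group A] [Group B] (SA : Set A) (SB : Set B)
    (hSAfin : SA.Finite) (hSBfin : SB.Finite)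
    (hSAgen : Subgroup.closure SA = ⊤) (hSBgen : Subgroup.closure SB = ⊤)
    (M : MorseGauge) (a : CombBoundaryM (wordDist SA) (wordDist SB) M) :
    (∀ k, a ∈ VM k a) ∧
    (∀ i j, ∃ k, VM k a ⊆ VM i a ∩ VM j a) ∧
    (∀ i, ∃ j, ∀ b ∈ VM j a, ∃ k, VM k b ⊆ VM i a) :=
  stmt14_general A B SA SB hSAgen hSBgen M a

end Statement14
end

section
/- Let G, H be proper geodesic metric spaces and p : ∂_*G → ∂_*H a homeomorphism of Morse boundaries (with direct limit topology). Then there exists a map h between Morse gauges such that for every Morse gauge M, p(∂^M_*G) ⊂ ∂^{h(M)}_*H and p^{-1}(∂^M_*H) ⊂ ∂^{h(M)}_*G. -/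
open Set

variable {X : Type*} [MetricSpace X]

/-- A Morse geodesic ray from `e`. -/
def IsMorseRayR (e : X) (γ : ℝ → X) : Prop :=
  IsRayFrom e γ ∧ ∃ M, IsMorseOn M γ (Ici 0)

/-- The type of Morse geodesic rays from `e`. -/
def MRayR (X : Type*) [MetricSpace X] (e : X) := {γ : ℝ → X // IsMorseRayR e γ}

/-- The Morse boundary: Morse rays from `e` up to bounded distance. -/
def MorseBoundaryR (X : Type*) [MetricSpace X] (e : X) :=
  Quot (fun γ γ' : MRayR X e => ∃ C, ∀ t ≥ (0 : ℝ), dist (γ.1 t) (γ'.1 t) ≤ C)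

/-- `z` admits an `M`-Morse realization. -/
def MorseDirR {X : Type*} [MetricSpace X] (e : X) (M : MorseGauge)
    (z : MorseBoundaryR X e) : Prop :=
  ∃ γ : MRayR X e, IsMorseOn M γ.1 (Ici 0) ∧ Quot.mk _ γ = z

/-- The `M`-Morse stratum `∂^M_* X` of the Morse boundary. -/
def stratumR (X : Type*) [MetricSpace X] (e : X) (M : MorseGauge) :
    Set (MorseBoundaryR X e) :=
  {z | MorseDirR e M z}

/-- The neighbourhood `U_{M,n}(z)` inside the `M`-stratum. -/
def UR {X : Type*} [MetricSpace X] (e : X) (M : MorseGauge) (n : ℝ)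
    (z : MorseBoundaryR X e) : Set (MorseBoundaryR X e) :=
  {w | ∃ η : MRayR X e, Quot.mk _ η = w ∧ IsMorseOn M η.1 (Ici 0) ∧
        ∀ ξ : MRayR X e, IsMorseOn M ξ.1 (Ici 0) → Quot.mk _ ξ = z →
          ∀ t ∈ Icc 0 n, dist (η.1 t) (ξ.1 t) < deltaM M}

/-- The direct-limit topology on the Morse boundary. -/
def morseTopologyR (X : Type*) [MetricSpace X] (e : X) :
    TopologicalSpace (MorseBoundaryR X e) where
  IsOpen O := ∀ M z, z ∈ O → MorseDirR e M z →
    ∃ n : ℝ, UR e M n z ∩ stratumR X e M ⊆ O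
  isOpen_univ := by intro M z _ _; exact ⟨0, fun w _ => trivial⟩
  isOpen_inter := by
    intro O₁ O₂ h₁ h₂ M z hz hM
    obtain ⟨n₁, hn₁⟩ := h₁ M z hz.1 hM
    obtain ⟨n₂, hn₂⟩ := h₂ M z hz.2 hM
    refine ⟨max n₁ n₂, fun w hw => ⟨hn₁ ⟨?_, hw.2⟩, hn₂ ⟨?_, hw.2⟩⟩⟩
    · obtain ⟨η, h1, h2, h3⟩ := hw.1
      refine ⟨η, h1, h2, fun ξ a b t ht => h3 ξ a b t ⟨ht.1, ht.2.trans (le_max_left _ _)⟩⟩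
    · obtain ⟨η, h1, h2, h3⟩ := hw.1
      refine ⟨η, h1, h2, fun ξ a b t ht => h3 ξ a b t ⟨ht.1, ht.2.trans (le_max_right _ _)⟩⟩
  isOpen_sUnion := by
    intro S hS M z hz hM
    obtain ⟨O, hO, hzO⟩ := hz
    obtain ⟨n, hn⟩ := hS O hO M z hzO hM
    exact ⟨n, fun w hw => ⟨O, hO, hn hw⟩⟩

/-! A homeomorphism carries relatively compact sets (every ultrafilter containing them converges)
to relatively compact sets. It therefore suffices that each stratum `∂^M_*` is relatively compact
and that each relatively compact set lies in a single stratum (Cordes–Durham, Lemma 4.1).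

The first holds because representatives of points of `∂^M_*` converge pointwise, by properness, to
a geodesic ray that is Morse for a slightly worse gauge; asymptotic rays from the basepoint, one of
them `M`-Morse, stay `2 M(3,0)`-close, so convergence on compact intervals is convergence in the
direct-limit topology. For the second, boundary points whose optimal Morse constants escape to
infinity form a closed discrete set, since each stratum contains only finitely many of them. -/

section Rays

variable {Z : Type*} [MetricSpace Z] {o : Z} {γ γ' : ℝ → Z}

lemma IsRayFrom.dist_basepoint_s15 (hγ : IsRayFrom o γ) {t : ℝ} (ht : 0 ≤ t) : dist o (γ t) = t := by
  rw [← hγ.1, hγ.2 0 self_mem_Ici t ht, zero_sub, abs_neg, abs_of_nonneg ht]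

lemma IsRayFrom.le_dist_add (hγ : IsRayFrom o γ) {t : ℝ} (ht : 0 ≤ t) (x : Z) :
    t ≤ dist o x + dist x (γ t) := by
  simpa only [hγ.dist_basepoint_s15 ht] using dist_triangle o x (γ t)

lemma IsGeodesicOn.lipschitzOnWith {s : Set ℝ} (hγ : IsGeodesicOn γ s) :
    LipschitzOnWith 1 γ s :=
  LipschitzOnWith.of_dist_le_mul (f := γ) fun x hx y hy => by simp [hγ x hx y hy, Real.dist_eq]

lemma IsRayFrom.dist_le_two_mul_dist (hγ : IsRayFrom o γ) (hγ' : IsRayFrom o γ') {u w : ℝ}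
    (hu : 0 ≤ u) (hw : 0 ≤ w) : dist (γ u) (γ' u) ≤ 2 * dist (γ u) (γ' w) := by
  have hdiff : |u - w| ≤ dist (γ u) (γ' w) := by
    have := abs_dist_sub_le (γ u) (γ' w) o
    rwa [dist_comm _ o, dist_comm _ o, hγ.dist_basepoint_s15 hu, hγ'.dist_basepoint_s15 hw] at this
  calc dist (γ u) (γ' u) ≤ dist (γ u) (γ' w) + dist (γ' w) (γ' u) := dist_triangle _ _ _
    _ = dist (γ u) (γ' w) + |u - w| := by rw [hγ'.2 w hw u hu, abs_sub_comm]
    _ ≤ 2 * dist (γ u) (γ' w) := by linarith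

lemma IsRayFrom.exists_forall_dist_le (hγ : IsRayFrom o γ) (x : Z) :
    ∃ p, 0 ≤ p ∧ ∀ w, 0 ≤ w → dist x (γ p) ≤ dist x (γ w) := by
  have hcont : ContinuousOn (fun w => dist x (γ w)) (Icc 0 (2 * dist o x)) :=
    continuous_const.dist continuous_id |>.comp_continuousOn
      (hγ.2.lipschitzOnWith.continuousOn.mono Icc_subset_Ici_self)
  obtain ⟨p, hp, hmin⟩ := isCompact_Icc.exists_isMinOn
    (nonempty_Icc.2 (by positivity)) hcont
  refine ⟨p, hp.1, fun w hw => ?_⟩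
  rcases le_or_gt w (2 * dist o x) with hwx | hwx
  · exact hmin ⟨hw, hwx⟩
  · have h0 : dist x (γ p) ≤ dist x (γ 0) := hmin ⟨le_rfl, by positivity⟩
    have hw' := hγ.le_dist_add hw x
    rw [hγ.1, dist_comm x o] at h0
    linarith

end Rays

section Asymptotic

variable {Z : Type*} {γ γ' σ : ℝ → Z}

noncomputable def concatAt (γ σ : ℝ → Z) (p : ℝ) : ℝ → Z :=
  fun v => if v ≤ p then γ v else σ (v - p)

lemma concatAt_of_le {v p : ℝ} (h : v ≤ p) : concatAt γ σ p v = γ v := if_pos h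

lemma concatAt_of_lt {v p : ℝ} (h : p < v) : concatAt γ σ p v = σ (v - p) := if_neg h.not_ge

lemma concatAt_add {p r : ℝ} (hr : 0 ≤ r) (hσ0 : σ 0 = γ p) :
    concatAt γ σ p (p + r) = σ r := by
  rcases hr.eq_or_lt with rfl | hr
  · rw [add_zero, concatAt_of_le le_rfl, hσ0]
  · rw [concatAt_of_lt (by linarith), add_sub_cancel_left]

variable [MetricSpace Z] {o : Z}

/-- `γ p` is nearest to `x`, so `dist (γ v) (σ s) ≥ s`; through `γ p`, it is `≥ p - v - s`. -/
lemma dist_concatAt_bounds (hγ : IsGeodesicOn γ (Ici 0)) {p r : ℝ} (hp : 0 ≤ p) {x : Z}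
    (hmin : ∀ w, 0 ≤ w → dist x (γ p) ≤ dist x (γ w)) (hσ : IsGeodesicOn σ (Icc 0 r))
    (hσ0 : σ 0 = γ p) (hσr : σ r = x) {v s : ℝ} (hv : v ∈ Icc 0 p) (hs : s ∈ Icc 0 r) :
    (p - v + s) / 3 ≤ dist (γ v) (σ s) ∧ dist (γ v) (σ s) ≤ p - v + s := by
  have hr : 0 ≤ r := hs.1.trans hs.2
  have hps : dist (γ p) (σ s) = s := by
    rw [← hσ0, hσ 0 ⟨le_rfl, hr⟩ s hs, zero_sub, abs_neg, abs_of_nonneg hs.1]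
  have hsx : dist (σ s) x = r - s := by
    rw [← hσr, hσ s hs r ⟨hr, le_rfl⟩, abs_of_nonpos (by linarith [hs.2]), neg_sub]
  have hvp : dist (γ v) (γ p) = p - v := by
    rw [hγ v hv.1 p hp, abs_of_nonpos (by linarith [hv.2]), neg_sub]
  have hrx : r = dist x (γ p) := by
    rw [← hσr, ← hσ0, hσ r ⟨hr, le_rfl⟩ 0 ⟨le_rfl, hr⟩, sub_zero, abs_of_nonneg hr]
  have hnear := hmin v hv.1
  have t1 := dist_triangle (γ v) (γ p) (σ s)
  have t2 := dist_triangle (γ v) (σ s) (γ p)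
  have t3 := dist_triangle x (σ s) (γ v)
  rw [dist_comm (σ s) (γ p)] at t2
  rw [dist_comm x (σ s), dist_comm (σ s) (γ v)] at t3
  constructor <;> linarith

lemma isQGOn_concatAt (hγ : IsGeodesicOn γ (Ici 0)) {p r : ℝ} (hp : 0 ≤ p) {x : Z}
    (hmin : ∀ w, 0 ≤ w → dist x (γ p) ≤ dist x (γ w)) (hσ : IsGeodesicOn σ (Icc 0 r))
    (hσ0 : σ 0 = γ p) (hσr : σ r = x) :
    IsQGOn 3 0 (concatAt γ σ p) (Icc 0 (p + r)) := by
  have key : ∀ v ∈ Icc 0 (p + r), ∀ w ∈ Icc 0 (p + r), v ≤ w →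
      (w - v) / 3 ≤ dist (concatAt γ σ p v) (concatAt γ σ p w) ∧
        dist (concatAt γ σ p v) (concatAt γ σ p w) ≤ w - v := by
    intro v hv w hw hvw
    rcases le_or_gt w p with hwp | hpw
    · rw [concatAt_of_le (hvw.trans hwp), concatAt_of_le hwp, hγ v hv.1 w hw.1,
        abs_of_nonpos (by linarith)]
      constructor <;> linarith
    have hw' : w - p ∈ Icc 0 r := ⟨by linarith, by linarith [hw.2]⟩
    rcases le_or_gt v p with hvp | hpv
    · rw [concatAt_of_le hvp, concatAt_of_lt hpw]
      have := dist_concatAt_bounds hγ hp hmin hσ hσ0 hσr ⟨hv.1, hvp⟩ hw'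
      constructor <;> linarith
    · have hv' : v - p ∈ Icc 0 r := ⟨by linarith, by linarith [hv.2]⟩
      rw [concatAt_of_lt hpv, concatAt_of_lt hpw, hσ _ hv' _ hw', abs_of_nonpos (by linarith)]
      constructor <;> linarith
  intro v hv w hw
  rcases le_total v w with hvw | hwv
  · obtain ⟨h1, h2⟩ := key v hv w hw hvw
    rw [abs_of_nonpos (by linarith)]
    constructor <;> linarith
  · obtain ⟨h1, h2⟩ := key w hw v hv hwv
    rw [dist_comm, abs_of_nonneg (by linarith)]
    constructor <;> linarith

/-- Going along `γ` to a point `γ p` nearest to a far point `γ' t` and then straight to `γ' t`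
is a `(3, 0)`-quasi-geodesic with endpoints on `γ'`, which passes through `γ u`. -/
theorem IsMorseOn.dist_le_of_asymptotic (hZ : GeodesicSpace Z) {M : MorseGauge}
    (hγ : IsRayFrom o γ) (hγ' : IsRayFrom o γ') (hM : IsMorseOn M γ' (Ici 0)) {C : ℝ}
    (hC : ∀ t ≥ 0, dist (γ t) (γ' t) ≤ C) {u : ℝ} (hu : 0 ≤ u) :
    dist (γ u) (γ' u) ≤ 2 * M 3 0 := by
  have hC0 : 0 ≤ C := dist_nonneg.trans (hC 0 le_rfl)
  set t := u + C + 1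
  have ht : 0 ≤ t := by positivity
  obtain ⟨p, hp, hmin⟩ := hγ.exists_forall_dist_le (γ' t)
  set r := dist (γ p) (γ' t)
  have hrC : r ≤ C := by
    rw [show r = dist (γ' t) (γ p) from dist_comm _ _]
    exact (hmin t ht).trans ((dist_comm _ _).trans_le (hC t ht))
  have hup : u ≤ p := by
    have : t ≤ p + r := by simpa only [hγ.dist_basepoint_s15 hp] using hγ'.le_dist_add ht (γ p)
    linarith
  obtain ⟨σ, hσ0, hσr, hσ⟩ := hZ (γ p) (γ' t)
  have hqg := isQGOn_concatAt hγ.2 hp hmin hσ hσ0 hσr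
  have hstart : concatAt γ σ p 0 ∈ γ' '' Ici 0 :=
    ⟨0, self_mem_Ici, by rw [concatAt_of_le hp, hγ.1, hγ'.1]⟩
  have hend : concatAt γ σ p (p + r) ∈ γ' '' Ici 0 :=
    ⟨t, ht, by rw [concatAt_add dist_nonneg hσ0, hσr]⟩
  obtain ⟨w, hw, hdist⟩ := hM 3 0 (by norm_num) le_rfl _ 0 (p + r) (by positivity) hqg
    hstart hend u ⟨hu, by linarith [dist_nonneg (x := γ p) (y := γ' t)]⟩
  rw [concatAt_of_le hup] at hdist
  linarith [hγ.dist_le_two_mul_dist hγ' hu hw]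

end Asymptotic

section Perturbation

variable {Z : Type*} [MetricSpace Z] {γ γ' η η' : ℝ → Z} {s : Set ℝ} {L e D : ℝ}

lemma IsQGOn.of_dist_le (hη : IsQGOn L e η s) (hD : ∀ x, dist (η' x) (η x) ≤ D) :
    IsQGOn L (e + 2 * D) η' s := by
  intro x hx y hy
  obtain ⟨h1, h2⟩ := hη x hx y hy
  have t1 := dist_triangle4 (η' x) (η x) (η y) (η' y)
  have t2 := dist_triangle4 (η x) (η' x) (η' y) (η y)
  rw [dist_comm (η y) (η' y)] at t1
  rw [dist_comm (η x) (η' x)] at t2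
  constructor <;> linarith [hD x, hD y]

lemma IsQGOn.mono_right {e' : ℝ} (hη : IsQGOn L e η s) (he : e ≤ e') : IsQGOn L e' η s :=
  fun x hx y hy => ⟨by linarith [(hη x hx y hy).1], by linarith [(hη x hx y hy).2]⟩

lemma IsMorseOn.mono {M M' : MorseGauge} (hM : IsMorseOn M γ s)
    (h : ∀ L e, 1 ≤ L → 0 ≤ e → M L e ≤ M' L e) : IsMorseOn M' γ s := by
  intro L e hL he η a b hab hqg ha hb t ht
  obtain ⟨u, hu, hd⟩ := hM L e hL he η a b hab hqg ha hb t ht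
  exact ⟨u, hu, hd.trans (h L e hL he)⟩

/-- Moving the endpoints of `η` onto `γ` costs `2 D` in the additive constant. -/
lemma IsMorseOn.exists_dist_le_of_endpoints {M : MorseGauge} (hM : IsMorseOn M γ s)
    (hL : 1 ≤ L) (he : 0 ≤ e) (hD : 0 ≤ D) {a b : ℝ} (hab : a ≤ b)
    (hη : IsQGOn L e η (Icc a b)) {ua ub : ℝ} (hua : ua ∈ s) (hub : ub ∈ s)
    (ha : dist (η a) (γ ua) ≤ D) (hb : dist (η b) (γ ub) ≤ D) {t : ℝ} (ht : t ∈ Icc a b) :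
    ∃ u ∈ s, dist (η t) (γ u) ≤ max (M L (e + 2 * D)) D := by
  classical
  by_cases hta : t = a
  · exact ⟨ua, hua, hta ▸ ha.trans (le_max_right _ _)⟩
  by_cases htb : t = b
  · exact ⟨ub, hub, htb ▸ hb.trans (le_max_right _ _)⟩
  set η' := Function.update (Function.update η a (γ ua)) b (γ ub) with hη'
  have hclose : ∀ x, dist (η' x) (η x) ≤ D := by
    intro x
    by_cases hxb : x = b
    · rw [hη', hxb, Function.update_self, dist_comm]; exact hb
    by_cases hxa : x = a
    · rw [hη', Function.update_of_ne hxb, hxa, Function.update_self, dist_comm]; exact ha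
    · rw [hη', Function.update_of_ne hxb, Function.update_of_ne hxa, dist_self]; exact hD
  have hη'a : η' a ∈ γ '' s := by
    by_cases hba : a = b
    · exact ⟨ub, hub, by rw [hη', hba, Function.update_self]⟩
    · exact ⟨ua, hua, by rw [hη', Function.update_of_ne hba, Function.update_self]⟩
  have hη'b : η' b ∈ γ '' s := ⟨ub, hub, by rw [hη', Function.update_self]⟩
  obtain ⟨u, hu, hd⟩ := hM L (e + 2 * D) hL (by linarith) η' a b hab (hη.of_dist_le hclose)
    hη'a hη'b t ht
  rw [hη', Function.update_of_ne htb, Function.update_of_ne hta] at hd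
  exact ⟨u, hu, hd.trans (le_max_left _ _)⟩

def transferGauge (M : MorseGauge) (D : ℝ) : MorseGauge := fun L e => max (M L (e + 2 * D)) D + D

lemma transferGauge_nonneg (M : MorseGauge) {D : ℝ} (hD : 0 ≤ D) (L e : ℝ) :
    0 ≤ transferGauge M D L e :=
  add_nonneg (hD.trans (le_max_right _ _)) hD

lemma IsMorseOn.of_dist_le {M : MorseGauge} (hM : IsMorseOn M γ' s) (hD : 0 ≤ D)
    (hclose : ∀ t ∈ s, dist (γ t) (γ' t) ≤ D) : IsMorseOn (transferGauge M D) γ s := by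
  intro L e hL he η a b hab hη ha hb t ht
  obtain ⟨ua, hua, hηa⟩ := ha
  obtain ⟨ub, hub, hηb⟩ := hb
  obtain ⟨u, hu, hd⟩ := hM.exists_dist_le_of_endpoints hL he hD hab hη hua hub
    (hηa ▸ hclose ua hua) (hηb ▸ hclose ub hub) ht
  refine ⟨u, hu, ?_⟩
  calc dist (η t) (γ u) ≤ dist (η t) (γ' u) + dist (γ' u) (γ u) := dist_triangle _ _ _
    _ ≤ max (M L (e + 2 * D)) D + D := by
      rw [dist_comm (γ' u)]
      exact add_le_add hd (hclose u hu)

end Perturbation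

section Limits

open Filter Topology

variable {Z : Type*} [MetricSpace Z] {o : Z} {ι : Type*} {F : Filter ι} {g : ι → ℝ → Z}
  {γ : ℝ → Z}

lemma IsRayFrom.of_tendsto [F.NeBot] (hg : ∀ i, IsRayFrom o (g i))
    (hlim : ∀ t ≥ 0, Tendsto (fun i => g i t) F (𝓝 (γ t))) : IsRayFrom o γ := by
  refine ⟨tendsto_nhds_unique (hlim 0 le_rfl) ?_, fun t ht u hu => ?_⟩
  · simp only [fun i => (hg i).1, tendsto_const_nhds]
  · refine tendsto_nhds_unique ((hlim t ht).dist (hlim u hu)) ?_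
    simp only [fun i => (hg i).2 t ht u hu, tendsto_const_nhds]

/-- Compare with the values on a finite `ε / 3`-grid; all the maps are `1`-Lipschitz. -/
lemma eventually_forall_Icc_dist_lt (hg : ∀ i, IsGeodesicOn (g i) (Ici 0))
    (hγ : IsGeodesicOn γ (Ici 0)) (hlim : ∀ t ≥ 0, Tendsto (fun i => g i t) F (𝓝 (γ t)))
    (T : ℝ) {ε : ℝ} (hε : 0 < ε) : ∀ᶠ i in F, ∀ t ∈ Icc 0 T, dist (g i t) (γ t) < ε := by
  set δ := ε / 3
  have hδ : 0 < δ := by positivity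
  have hgrid : ∀ᶠ i in F, ∀ j ∈ Finset.range (⌈T / δ⌉₊ + 1), dist (g i (j * δ)) (γ (j * δ)) < δ :=
    (eventually_all_finset _).2 fun j _ =>
      Metric.tendsto_nhds.1 (hlim _ (by positivity)) δ hδ
  filter_upwards [hgrid] with i hi t ht
  set j := ⌊t / δ⌋₊
  have hj : (j : ℝ) * δ ≤ t := (le_div_iff₀ hδ).1 (Nat.floor_le (div_nonneg ht.1 hδ.le))
  have hj' : t < (j : ℝ) * δ + δ := by
    have := Nat.lt_floor_add_one (t / δ)
    rw [div_lt_iff₀ hδ] at this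
    linarith
  have hjmem : j ∈ Finset.range (⌈T / δ⌉₊ + 1) :=
    Finset.mem_range_succ_iff.2 <| (Nat.floor_mono (div_le_div_of_nonneg_right ht.2 hδ.le)).trans
      (Nat.floor_le_ceil _)
  have hjδ : (0 : ℝ) ≤ j * δ := by positivity
  have h1 : dist (g i t) (g i (j * δ)) ≤ δ := by
    rw [hg i t ht.1 _ hjδ, abs_of_nonneg (by linarith)]
    linarith
  have h3 : dist (γ (j * δ)) (γ t) ≤ δ := by
    rw [hγ _ hjδ t ht.1, abs_of_nonpos (by linarith)]
    linarith
  calc dist (g i t) (γ t)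
      ≤ dist (g i t) (g i (j * δ)) + dist (g i (j * δ)) (γ (j * δ)) + dist (γ (j * δ)) (γ t) :=
        dist_triangle4 _ _ _ _
    _ < δ + δ + δ := by linarith [hi j hjmem]
    _ = ε := by ring

lemma exists_dist_le_of_forall_lt {a b c : ℝ} {x : Z} (hγ : ContinuousOn γ (Icc a b))
    (h : ∀ ε > 0, ∃ u ∈ Icc a b, dist x (γ u) < c + ε) : ∃ u ∈ Icc a b, dist x (γ u) ≤ c := by
  obtain ⟨u₀, hu₀, -⟩ := h 1 one_pos
  obtain ⟨u, hu, hmin⟩ := isCompact_Icc.exists_isMinOn ⟨u₀, hu₀⟩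
    (continuous_const.dist continuous_id |>.comp_continuousOn hγ)
  refine ⟨u, hu, le_of_forall_pos_lt_add fun ε hε => ?_⟩
  obtain ⟨v, hv, hdv⟩ := h ε hε
  exact (hmin hv).trans_lt hdv

/-- The floor `1 / 2` makes `deltaM W` exceed `2 * W 3 0 + 1` for `W = relaxGauge M`
(see `mk_mem_UR`). -/
noncomputable def relaxGauge (M : MorseGauge) : MorseGauge := fun L e => max (M L (e + 1)) (1 / 2)

lemma IsMorseOn.relax {M : MorseGauge} {s : Set ℝ} (hM : IsMorseOn M γ s) :
    IsMorseOn (relaxGauge M) γ s := by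
  intro L e hL he η a b hab hη ha hb t ht
  obtain ⟨u, hu, hd⟩ := hM L (e + 1) hL (by linarith) η a b hab (hη.mono_right (by linarith))
    ha hb t ht
  exact ⟨u, hu, hd.trans (le_max_left _ _)⟩

/-- A quasi-geodesic with endpoints on `γ` has them `1/2`-close to `g i` for `i` late enough. -/
lemma IsMorseOn.of_tendsto [F.NeBot] {M : MorseGauge} (hg : ∀ i, IsRayFrom o (g i))
    (hM : ∀ᶠ i in F, IsMorseOn M (g i) (Ici 0)) (hγ : IsRayFrom o γ)
    (hlim : ∀ t ≥ 0, Tendsto (fun i => g i t) F (𝓝 (γ t))) :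
    IsMorseOn (relaxGauge M) γ (Ici 0) := by
  intro L e hL he η a b hab hη ha hb t ht
  obtain ⟨sa, hsa, hηa⟩ := ha
  obtain ⟨sb, hsb, hηb⟩ := hb
  set c := relaxGauge M L e
  set B := dist o (η t) + c
  suffices ∃ u ∈ Icc 0 B, dist (η t) (γ u) ≤ c from
    let ⟨u, hu, hd⟩ := this; ⟨u, hu.1, hd⟩
  refine exists_dist_le_of_forall_lt
    (hγ.2.lipschitzOnWith.continuousOn.mono Icc_subset_Ici_self) fun ε hε => ?_
  have hnear : ∀ s ≥ 0, ∀ᶠ i in F, dist (γ s) (g i s) ≤ 1 / 2 := fun s hs =>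
    (Metric.tendsto_nhds.1 (hlim s hs) (1 / 2) one_half_pos).mono fun i hi => by
      rw [dist_comm]; exact hi.le
  obtain ⟨i, hMi, hia, hib, hunif⟩ := (hM.and <| (hnear sa hsa).and <| (hnear sb hsb).and <|
    eventually_forall_Icc_dist_lt (fun i => (hg i).2) hγ.2 hlim B hε).exists
  obtain ⟨v, hv, hdv⟩ := hMi.exists_dist_le_of_endpoints hL he one_half_pos.le hab hη hsa hsb
    (hηa ▸ hia) (hηb ▸ hib) ht
  replace hdv : dist (η t) (g i v) ≤ c := by
    rwa [show e + 2 * (1 / 2) = e + 1 by ring] at hdv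
  have hvB : v ∈ Icc 0 B := ⟨hv, by linarith [(hg i).le_dist_add hv (η t)]⟩
  refine ⟨v, hvB, ?_⟩
  calc dist (η t) (γ v) ≤ dist (η t) (g i v) + dist (g i v) (γ v) := dist_triangle _ _ _
    _ < c + ε := add_lt_add_of_le_of_lt hdv (hunif v hvB)

end Limits

section OptimalConstant

variable {Z : Type*} [MetricSpace Z] {o : Z} {γ : ℝ → Z} {L e c : ℝ}

def MorseBoundAt (γ : ℝ → Z) (L e c : ℝ) : Prop :=
  ∀ (η : ℝ → Z) (a b : ℝ), a ≤ b → IsQGOn L e η (Icc a b) →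
    η a ∈ γ '' Ici 0 → η b ∈ γ '' Ici 0 → ∀ t ∈ Icc a b, ∃ u ∈ Ici 0, dist (η t) (γ u) ≤ c

noncomputable def morseConst (γ : ℝ → Z) (L e : ℝ) : ℝ := sInf {c | 0 ≤ c ∧ MorseBoundAt γ L e c}

lemma morseConst_le (hc : 0 ≤ c) (h : MorseBoundAt γ L e c) : morseConst γ L e ≤ c :=
  csInf_le ⟨0, fun _ hx => hx.1⟩ ⟨hc, h⟩

/-- The witnesses `u` for near-optimal constants stay in a fixed compact interval. -/
lemma morseBoundAt_morseConst {M : MorseGauge} (hγ : IsRayFrom o γ) (hM : IsMorseOn M γ (Ici 0))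
    (hL : 1 ≤ L) (he : 0 ≤ e) : MorseBoundAt γ L e (morseConst γ L e) := by
  intro η a b hab hη ha hb t ht
  have hne : {c | 0 ≤ c ∧ MorseBoundAt γ L e c}.Nonempty :=
    ⟨max (M L e) 0, le_max_right _ _, fun η a b hab hη ha hb t ht =>
      let ⟨u, hu, hd⟩ := hM L e hL he η a b hab hη ha hb t ht; ⟨u, hu, hd.trans (le_max_left _ _)⟩⟩
  suffices ∃ u ∈ Icc 0 (dist o (η t) + morseConst γ L e + 1),
      dist (η t) (γ u) ≤ morseConst γ L e from
    let ⟨u, hu, hd⟩ := this; ⟨u, hu.1, hd⟩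
  refine exists_dist_le_of_forall_lt
    (hγ.2.lipschitzOnWith.continuousOn.mono Icc_subset_Ici_self) fun ε hε => ?_
  obtain ⟨c, ⟨-, hc⟩, hlt⟩ := exists_lt_of_csInf_lt hne
    (lt_add_of_pos_right (morseConst γ L e) (lt_min hε one_pos))
  obtain ⟨u, hu, hd⟩ := hc η a b hab hη ha hb t ht
  have hmin := min_le_left ε 1
  have hmin' := min_le_right ε 1
  exact ⟨u, ⟨hu, by linarith [hγ.le_dist_add hu (η t)]⟩, by linarith⟩

end OptimalConstant

section Strata

variable {Z : Type*} [MetricSpace Z] {o : Z} {M : MorseGauge}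

lemma mk_eq_mk_iff {γ γ' : MRayR Z o} :
    (Quot.mk _ γ : MorseBoundaryR Z o) = Quot.mk _ γ' ↔
      ∃ C, ∀ t ≥ (0 : ℝ), dist (γ.1 t) (γ'.1 t) ≤ C := by
  refine Quot.eq.trans (Equivalence.eqvGen_iff ⟨fun γ => ⟨0, fun t _ => by simp⟩, ?_, ?_⟩)
  · rintro γ γ' ⟨C, hC⟩
    exact ⟨C, fun t ht => dist_comm (γ'.1 t) (γ.1 t) ▸ hC t ht⟩
  · rintro γ γ' γ'' ⟨C, hC⟩ ⟨C', hC'⟩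
    exact ⟨C + C', fun t ht =>
      (dist_triangle _ (γ'.1 t) _).trans (add_le_add (hC t ht) (hC' t ht))⟩

lemma MRayR.dist_le_of_mk_eq (hZ : GeodesicSpace Z) {γ γ' : MRayR Z o}
    (h : (Quot.mk _ γ : MorseBoundaryR Z o) = Quot.mk _ γ') (hM : IsMorseOn M γ'.1 (Ici 0))
    {u : ℝ} (hu : 0 ≤ u) : dist (γ.1 u) (γ'.1 u) ≤ 2 * M 3 0 :=
  let ⟨_, hC⟩ := mk_eq_mk_iff.1 h
  hM.dist_le_of_asymptotic hZ γ.2.1 γ'.2.1 hC hu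

lemma IsMorseOn.nonneg_three_zero (hZ : GeodesicSpace Z) {γ : ℝ → Z} (hγ : IsRayFrom o γ)
    (hM : IsMorseOn M γ (Ici 0)) : 0 ≤ M 3 0 := by
  have := hM.dist_le_of_asymptotic hZ hγ hγ (C := 0) (by simp) le_rfl
  linarith [dist_nonneg (x := γ 0) (y := γ 0)]

lemma stratumR_mono {M' : MorseGauge} (h : ∀ L e, 1 ≤ L → 0 ≤ e → M L e ≤ M' L e) :
    stratumR Z o M ⊆ stratumR Z o M' := fun _ ⟨γ, hγ, hz⟩ => ⟨γ, hγ.mono h, hz⟩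

lemma isMorseOn_out_of_mem_stratumR (hZ : GeodesicSpace Z) {z : MorseBoundaryR Z o}
    (hz : z ∈ stratumR Z o M) : IsMorseOn (transferGauge M (2 * M 3 0)) z.out.1 (Ici 0) := by
  obtain ⟨γ, hM, rfl⟩ := hz
  exact hM.of_dist_le (by linarith [hM.nonneg_three_zero hZ γ.2.1]) fun t ht =>
    MRayR.dist_le_of_mk_eq hZ (Quot.out_eq _) hM ht

lemma morseConst_out_le (hZ : GeodesicSpace Z) {z : MorseBoundaryR Z o}
    (hz : z ∈ stratumR Z o M) {L e : ℝ} (hL : 1 ≤ L) (he : 0 ≤ e) :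
    morseConst z.out.1 L e ≤ transferGauge M (2 * M 3 0) L e := by
  obtain ⟨γ, hM, -⟩ := id hz
  exact morseConst_le (transferGauge_nonneg _ (by linarith [hM.nonneg_three_zero hZ γ.2.1]) _ _)
    (isMorseOn_out_of_mem_stratumR hZ hz L e hL he)

lemma mem_stratumR_of_morseConst_le {z : MorseBoundaryR Z o}
    (h : ∀ L e, 1 ≤ L → 0 ≤ e → morseConst z.out.1 L e ≤ M L e) : z ∈ stratumR Z o M := by
  obtain ⟨M₀, hM₀⟩ := z.out.2.2
  refine ⟨z.out, fun L e hL he η a b hab hη ha hb t ht => ?_, Quot.out_eq z⟩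
  obtain ⟨u, hu, hd⟩ := morseBoundAt_morseConst z.out.2.1 hM₀ hL he η a b hab hη ha hb t ht
  exact ⟨u, hu, hd.trans (h L e hL he)⟩

end Strata

section MorseTopology

open Filter Topology

/-- Implied by compactness of the closure. The strata of the Morse boundary have this property for
every gauge, and it is all that Lemma 4.1 needs. -/
def IsRelCompact {α : Type*} [TopologicalSpace α] (S : Set α) : Prop :=
  ∀ F : Ultrafilter α, S ∈ F → ∃ x, (F : Filter α) ≤ 𝓝 x

lemma IsRelCompact.image {α β : Type*} [TopologicalSpace α] [TopologicalSpace β] {S : Set α}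
    (hS : IsRelCompact S) {f : α → β} (hf : Continuous f) : IsRelCompact (f '' S) := by
  intro G hG
  obtain ⟨x, hx⟩ := hS _ (Ultrafilter.ofComapInfPrincipal_mem hG)
  refine ⟨f x, ?_⟩
  rw [← Ultrafilter.ofComapInfPrincipal_eq_of_map hG, Ultrafilter.coe_map]
  exact (Filter.map_mono hx).trans hf.continuousAt

attribute [local instance] morseTopologyR

variable {Z : Type*} [MetricSpace Z] {o : Z}

lemma UR_anti {M : MorseGauge} {z : MorseBoundaryR Z o} {n n' : ℝ} (h : n' ≤ n) :
    UR o M n z ⊆ UR o M n' z := fun _ ⟨η, h1, h2, h3⟩ =>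
  ⟨η, h1, h2, fun ξ hξ hq t ht => h3 ξ hξ hq t ⟨ht.1, ht.2.trans h⟩⟩

lemma eventually_notMem_UR (hZ : GeodesicSpace Z) {R : MorseGauge} {z w : MorseBoundaryR Z o}
    (hw : MorseDirR o R w) (hzw : z ≠ w) : ∀ᶠ n in atTop, z ∉ UR o R n w := by
  obtain ⟨ξ, hξ, rfl⟩ := hw
  suffices ∃ n, z ∉ UR o R n (Quot.mk _ ξ) from
    let ⟨n, hn⟩ := this; eventually_atTop.2 ⟨n, fun _ hn' h => hn (UR_anti hn' h)⟩
  by_contra! h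
  refine hzw ((Quot.out_eq z).symm.trans (mk_eq_mk_iff.2 ⟨2 * R 3 0 + deltaM R, fun t ht => ?_⟩))
  obtain ⟨η, hηz, hη, hclose⟩ := h t
  calc dist (z.out.1 t) (ξ.1 t) ≤ dist (z.out.1 t) (η.1 t) + dist (η.1 t) (ξ.1 t) :=
        dist_triangle _ _ _
    _ ≤ 2 * R 3 0 + deltaM R := add_le_add
        (MRayR.dist_le_of_mk_eq hZ ((Quot.out_eq z).trans hηz.symm) hη ht)
        (hclose ξ hξ rfl t ⟨ht, le_rfl⟩).le

lemma mk_mem_UR (hZ : GeodesicSpace Z) {W : MorseGauge} (hW : 1 / 2 ≤ W 3 0) {η ξ : MRayR Z o}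
    (hη : IsMorseOn W η.1 (Ici 0)) {n : ℝ} (hclose : ∀ t ∈ Icc 0 n, dist (η.1 t) (ξ.1 t) < 1) :
    Quot.mk _ η ∈ UR o W n (Quot.mk _ ξ) := by
  refine ⟨η, rfl, hη, fun ξ' hξ' hξξ' t ht => ?_⟩
  calc dist (η.1 t) (ξ'.1 t) ≤ dist (η.1 t) (ξ.1 t) + dist (ξ.1 t) (ξ'.1 t) := dist_triangle _ _ _
    _ < 1 + 2 * W 3 0 :=
        add_lt_add_of_lt_of_le (hclose t ht) (MRayR.dist_le_of_mk_eq hZ hξξ'.symm hξ' ht.1)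
    _ ≤ 8 * W 3 0 := by linarith
    _ ≤ deltaM W := le_max_right _ _

/-- Along an ultrafilter on `∂^M_* Z` the representatives converge pointwise, by properness, to a
ray that is Morse for a relaxed gauge; uniform convergence on compact intervals then puts the
ultrafilter in every basic neighbourhood of the class of that ray. -/
theorem isRelCompact_stratumR [ProperSpace Z] (hZ : GeodesicSpace Z) (M : MorseGauge) :
    IsRelCompact (stratumR Z o M) := by
  intro F hF
  set M₁ := transferGauge M (2 * M 3 0)
  have hM₁ : ∀ᶠ z : MorseBoundaryR Z o in F, IsMorseOn M₁ z.out.1 (Ici 0) :=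
    Filter.mem_of_superset hF fun z hz => isMorseOn_out_of_mem_stratumR hZ hz
  have hex : ∀ t, ∃ x, 0 ≤ t → Tendsto (fun z : MorseBoundaryR Z o => z.out.1 t) F (𝓝 x) := by
    intro t
    by_cases ht : 0 ≤ t
    · obtain ⟨x, -, hx⟩ := (isCompact_closedBall o t).ultrafilter_le_nhds
        (F.map fun z => z.out.1 t) <| by
          rw [Ultrafilter.coe_map, le_principal_iff, mem_map]
          exact univ_mem' fun z => by
            rw [Set.mem_preimage, Metric.mem_closedBall, dist_comm, z.out.2.1.dist_basepoint_s15 ht]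
      exact ⟨x, fun _ => hx⟩
    · exact ⟨o, fun h => absurd h ht⟩
  choose γ hγ using hex
  have hray : IsRayFrom o γ := IsRayFrom.of_tendsto (fun z => z.out.2.1) hγ
  set W := relaxGauge M₁
  have hγW : IsMorseOn W γ (Ici 0) := IsMorseOn.of_tendsto (fun z => z.out.2.1) hM₁ hray hγ
  have hW : 1 / 2 ≤ W 3 0 := le_max_right _ _
  refine ⟨Quot.mk _ ⟨γ, hray, W, hγW⟩, le_nhds_iff.2 fun O hO hOopen => ?_⟩
  obtain ⟨n, hn⟩ := hOopen W _ hO ⟨⟨γ, hray, W, hγW⟩, hγW, rfl⟩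
  filter_upwards [hM₁, eventually_forall_Icc_dist_lt (fun z => z.out.2.1.2) hray.2 hγ n one_pos]
    with z hz hclose
  have hzW : IsMorseOn W z.out.1 (Ici 0) := hz.relax
  apply hn
  rw [← Quot.out_eq z]
  exact ⟨mk_mem_UR hZ hW hzW hclose, z.out, hzW, rfl⟩

end MorseTopology

section CompactInStratum

open Filter Topology

attribute [local instance] morseTopologyR

variable {Z : Type*} [MetricSpace Z] {o : Z}

/-- A stratum `∂^R_*` contains only finitely many of the `z k`, and each of them is separated
from any other point by a basic neighbourhood. -/
lemma isClosed_image_of_le_morseConst (hZ : GeodesicSpace Z) {L₀ e₀ : ℝ} (hL₀ : 1 ≤ L₀)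
    (he₀ : 0 ≤ e₀) {z : ℕ → MorseBoundaryR Z o}
    (hz : ∀ k : ℕ, (k : ℝ) ≤ morseConst (z k).out.1 L₀ e₀) (T : Set ℕ) : IsClosed (z '' T) := by
  rw [← isOpen_compl_iff]
  intro R w hw hR
  set K := ⌈transferGauge R (2 * R 3 0) L₀ e₀⌉₊
  have hsep : ∀ᶠ n in atTop, ∀ k ∈ Finset.range (K + 1), k ∈ T → z k ∉ UR o R n w :=
    (eventually_all_finset _).2 fun k _ => eventually_imp_distrib_left.2 fun hk =>
      eventually_notMem_UR hZ hR fun h => hw ⟨k, hk, h⟩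
  obtain ⟨n, hn⟩ := hsep.exists
  refine ⟨n, ?_⟩
  rintro _ ⟨hUR, hstr⟩ ⟨k, hk, rfl⟩
  have hkK : (k : ℝ) ≤ K :=
    ((hz k).trans (morseConst_out_le hZ hstr hL₀ he₀)).trans (Nat.le_ceil _)
  exact hn k (Finset.mem_range_succ_iff.2 (by exact_mod_cast hkK)) hk hUR

/-- Lemma 4.1 of Cordes–Durham. If the optimal constants were unbounded at some `(L₀, e₀)`, a
sequence with escaping constants would have a limit point in each of its (closed) tails. -/
theorem IsRelCompact.exists_subset_stratumR (hZ : GeodesicSpace Z)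
    {S : Set (MorseBoundaryR Z o)} (hS : IsRelCompact S) :
    ∃ P : MorseGauge, S ⊆ stratumR Z o P := by
  by_cases hbdd : ∀ L e, 1 ≤ L → 0 ≤ e → BddAbove ((fun z => morseConst z.out.1 L e) '' S)
  · refine ⟨fun L e => sSup ((fun z => morseConst z.out.1 L e) '' S), fun z hz =>
      mem_stratumR_of_morseConst_le fun L e hL he => ?_⟩
    exact le_csSup (hbdd L e hL he) ⟨z, hz, rfl⟩
  push Not at hbdd
  obtain ⟨L₀, e₀, hL₀, he₀, hunb⟩ := hbdd
  have hesc : ∀ k : ℕ, ∃ z ∈ S, (k : ℝ) ≤ morseConst z.out.1 L₀ e₀ := fun k =>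
    let ⟨_, ⟨z, hz, rfl⟩, hk⟩ := not_bddAbove_iff.1 hunb k; ⟨z, hz, hk.le⟩
  choose z hzS hz using hesc
  set F := Ultrafilter.of (map z atTop)
  obtain ⟨w, hw⟩ := hS F (Ultrafilter.of_le _ (mem_map.2 (univ_mem' hzS)))
  have hwz : ∀ j, w ∈ z '' Ici j := fun j =>
    (isClosed_image_of_le_morseConst hZ hL₀ he₀ hz _).mem_of_tendsto hw
      (Ultrafilter.of_le _ (image_mem_map (Ici_mem_atTop j)))
  obtain ⟨k, hk, rfl⟩ := hwz (⌈morseConst w.out.1 L₀ e₀⌉₊ + 1)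
  have hle : (k : ℝ) ≤ ⌈morseConst (z k).out.1 L₀ e₀⌉₊ := (hz k).trans (Nat.le_ceil _)
  have hge : (⌈morseConst (z k).out.1 L₀ e₀⌉₊ + 1 : ℝ) ≤ k := by exact_mod_cast hk
  linarith

end CompactInStratum

/-- a homeomorphism of Morse boundaries maps strata into strata: there is a
map `h` of Morse gauges with `p(∂^M_* X) ⊆ ∂^{h M}_* Y` and `p⁻¹(∂^M_* Y) ⊆ ∂^{h M}_* X`. -/
theorem stmt15 (X Y : Type) [MetricSpace X] [MetricSpace Y]
    [ProperSpace X] [ProperSpace Y] (hX : GeodesicSpace X) (hY : GeodesicSpace Y)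
    (e : X) (f : Y) (p : MorseBoundaryR X e ≃ MorseBoundaryR Y f)
    (hp : @Continuous _ _ (morseTopologyR X e) (morseTopologyR Y f) p)
    (hp' : @Continuous _ _ (morseTopologyR Y f) (morseTopologyR X e) p.symm) :
    ∃ h : MorseGauge → MorseGauge, ∀ M : MorseGauge,
      (∀ z ∈ stratumR X e M, p z ∈ stratumR Y f (h M)) ∧
      (∀ z ∈ stratumR Y f M, p.symm z ∈ stratumR X e (h M)) := by
  let _ := morseTopologyR X e
  let _ := morseTopologyR Y f
  have key : ∀ M : MorseGauge, ∃ N : MorseGauge,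
      p '' stratumR X e M ⊆ stratumR Y f N ∧ p.symm '' stratumR Y f M ⊆ stratumR X e N := by
    intro M
    obtain ⟨N₁, hN₁⟩ := ((isRelCompact_stratumR hX M).image hp).exists_subset_stratumR hY
    obtain ⟨N₂, hN₂⟩ := ((isRelCompact_stratumR hY M).image hp').exists_subset_stratumR hX
    exact ⟨fun L e => max (N₁ L e) (N₂ L e),
      hN₁.trans (stratumR_mono fun _ _ _ _ => le_max_left _ _),
      hN₂.trans (stratumR_mono fun _ _ _ _ => le_max_right _ _)⟩
  choose h hh using key
  exact ⟨h, fun M => ⟨fun z hz => (hh M).1 ⟨z, hz, rfl⟩, fun z hz => (hh M).2 ⟨z, hz, rfl⟩⟩⟩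
end
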